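/- arXiv:1508.04625 — 6 statements merged into one kernel-verified Lean document; each statement's English description precedes it below -/
import Mathlib

section
/- Suppose each row block j of M has exactly one nonzero block component M_{j,i(j)}. If for every i, τ_i < 1/(β_i + ρ(Σ_{j ∈ J(i)} σ_j M_{j,i}* M_{j,i})), where ρ denotes the spectral radius, J(i) = {j : M_{j,i} ≠ 0}, and β_i ≥ 0, then the function Ṽ(x,y) = (1/2)‖x‖²_{τ^{-1}-β} + ⟨y, Mx⟩ + (1/2)‖y‖²_{σ^{-1}} satisfies: Ṽ^{1/2} is a norm on X × Y (i.e., Ṽ is a positive definite quadratic form). -/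
open scoped RealInnerProductSpace

/- STATEMENT 1: (Lemma 4 of the paper.) Suppose each row block `j` of `M` has exactly one
nonzero block component (given by `ι j`). If `τ i < 1/(β i + ρ(∑_{j ∈ J(i)} σ j M_{j,i}* M_{j,i}))`
for every `i`, then `Ṽ(x,y) = (1/2)‖x‖²_{τ⁻¹-β} + ⟨y, Mx⟩ + (1/2)‖y‖²_{σ⁻¹}` is a positive
definite quadratic form on `X × Y` (so that `Ṽ^{1/2}` is a norm). -/

lemma eig_mem_spectrum {E : Type} [NormedAddCommGroup E] [InnerProductSpace ℝ E]
    (T : E →L[ℝ] E) {μ : ℝ} (hμ : Module.End.HasEigenvalue (T : E →ₗ[ℝ] E) μ) :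
    μ ∈ spectrum ℝ T := by
  obtain ⟨v, hv⟩ := hμ.exists_hasEigenvector
  rw [spectrum.mem_iff]
  intro hu
  have hv0 : v ≠ 0 := hv.2
  have happ : (algebraMap ℝ (E →L[ℝ] E) μ - T) v = 0 := by
    have h1 : T v = μ • v := hv.apply_eq_smul
    simp [ContinuousLinearMap.sub_apply, h1]
  obtain ⟨u, hu⟩ := hu
  apply hv0
  have := congrArg (fun z => (↑u⁻¹ : E →L[ℝ] E) z) (hu ▸ happ)
  simpa [← ContinuousLinearMap.comp_apply, ← ContinuousLinearMap.mul_def,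
    u.inv_mul] using this

lemma rayleigh_le_spectralRadius {E : Type} [NormedAddCommGroup E] [InnerProductSpace ℝ E]
    [FiniteDimensional ℝ E] (T : E →L[ℝ] E) (hT : IsSelfAdjoint T) (x : E) :
    ⟪x, T x⟫ ≤ (spectralRadius ℝ T).toReal * ‖x‖^2 := by
  rw [real_inner_comm]
  rcases eq_or_ne x 0 with rfl | hx
  · simp
  · have : Nontrivial E := nontrivial_of_ne x 0 hx
    have hsym : (T : E →ₗ[ℝ] E).IsSymmetric := hT.isSymmetric
    set μ : ℝ := ⨆ z : { z : E // z ≠ 0 },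
        RCLike.re ⟪(T : E →ₗ[ℝ] E) z, (z : E)⟫ / ‖(z : E)‖ ^ 2 with hμdef
    have heig := hsym.hasEigenvalue_iSup_of_finiteDimensional
    have hmem : μ ∈ spectrum ℝ T := eig_mem_spectrum T heig
    have hle : (‖μ‖₊ : ENNReal) ≤ spectralRadius ℝ T := by
      exact le_iSup₂ (f := fun k (_ : k ∈ spectrum ℝ T) => (‖k‖₊ : ENNReal)) μ hmem
    have hfin : spectralRadius ℝ T ≠ ⊤ :=
      (lt_of_le_of_lt (spectrum.spectralRadius_le_nnnorm T) ENNReal.coe_lt_top).ne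
    have hμρ : μ ≤ (spectralRadius ℝ T).toReal := by
      calc μ ≤ |μ| := le_abs_self μ
        _ = ((‖μ‖₊ : ENNReal)).toReal := by simp [Real.norm_eq_abs]
        _ ≤ (spectralRadius ℝ T).toReal := ENNReal.toReal_mono hfin hle
    -- Rayleigh quotient ≤ μ
    have hbdd : BddAbove (Set.range fun z : { z : E // z ≠ 0 } =>
        RCLike.re ⟪(T : E →ₗ[ℝ] E) z, (z : E)⟫ / ‖(z : E)‖ ^ 2) := by
      refine ⟨‖T‖, ?_⟩
      rintro r ⟨z, rfl⟩
      have hz : (0:ℝ) < ‖(z:E)‖ := norm_pos_iff.mpr z.2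
      rw [div_le_iff₀ (by positivity)]
      calc RCLike.re ⟪(T : E →ₗ[ℝ] E) z, (z : E)⟫ = ⟪T (z : E), (z : E)⟫ := rfl
        _ ≤ ‖T (z:E)‖ * ‖(z:E)‖ := real_inner_le_norm _ _
        _ ≤ (‖T‖ * ‖(z:E)‖) * ‖(z:E)‖ := by
            gcongr; exact T.le_opNorm _
        _ = ‖T‖ * ‖(z:E)‖ ^ 2 := by ring
    have hray : ⟪T x, x⟫ / ‖x‖^2 ≤ μ := le_ciSup hbdd ⟨x, hx⟩
    have hx2 : (0:ℝ) < ‖x‖^2 := pow_pos (norm_pos_iff.mpr hx) 2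
    calc ⟪T x, x⟫ = (⟪T x, x⟫ / ‖x‖^2) * ‖x‖^2 := by field_simp
      _ ≤ μ * ‖x‖^2 := by exact mul_le_mul_of_nonneg_right hray hx2.le
      _ ≤ (spectralRadius ℝ T).toReal * ‖x‖^2 := by gcongr

open Classical in
theorem stmt1 {n p : ℕ}
    (Xs : Fin n → Type) (Ys : Fin p → Type)
    [∀ i, NormedAddCommGroup (Xs i)] [∀ i, InnerProductSpace ℝ (Xs i)]
    [∀ i, FiniteDimensional ℝ (Xs i)]
    [∀ j, NormedAddCommGroup (Ys j)] [∀ j, InnerProductSpace ℝ (Ys j)]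
    [∀ j, FiniteDimensional ℝ (Ys j)]
    (Mb : ∀ j i, Xs i →L[ℝ] Ys j)
    (ι : Fin p → Fin n) (hι : ∀ j i, Mb j i ≠ 0 ↔ i = ι j)
    (τ β : Fin n → ℝ) (σ : Fin p → ℝ)
    (hτ : ∀ i, 0 < τ i) (hβ : ∀ i, 0 ≤ β i) (hσ : ∀ j, 0 < σ j)
    (hstep : ∀ i, τ i < 1 / (β i +
      (spectralRadius ℝ (∑ j ∈ Finset.univ.filter (fun j => Mb j i ≠ 0),
        σ j • ((ContinuousLinearMap.adjoint (Mb j i)).comp (Mb j i)))).toReal)) :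
    ∀ (x : ∀ i, Xs i) (y : ∀ j, Ys j), ¬(x = 0 ∧ y = 0) →
      0 < (1/2) * ∑ i, ((τ i)⁻¹ - β i) * ‖x i‖^2
          + ∑ j, ⟪y j, (∑ i, Mb j i (x i))⟫
          + (1/2) * ∑ j, (σ j)⁻¹ * ‖y j‖^2 := by
  intro x y hxy
  set T : ∀ i, Xs i →L[ℝ] Xs i := fun i =>
    ∑ j ∈ Finset.univ.filter (fun j => Mb j i ≠ 0),
      σ j • ((ContinuousLinearMap.adjoint (Mb j i)).comp (Mb j i)) with hT
  set ρ : Fin n → ℝ := fun i => (spectralRadius ℝ (T i)).toReal with hρ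
  -- each block operator is self-adjoint
  have hTsa : ∀ i, IsSelfAdjoint (T i) := by
    intro i
    rw [hT]
    rw [isSelfAdjoint_iff, star_sum]
    refine Finset.sum_congr rfl fun j _ => ?_
    rw [star_smul, star_trivial,
      ContinuousLinearMap.star_eq_adjoint, ContinuousLinearMap.adjoint_comp,
      ContinuousLinearMap.adjoint_adjoint]
  -- quadratic form of T i
  have hquad : ∀ i, ⟪x i, T i (x i)⟫
      = ∑ j ∈ Finset.univ.filter (fun j => Mb j i ≠ 0), σ j * ‖Mb j i (x i)‖^2 := by
    intro i
    rw [hT]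
    simp only [ContinuousLinearMap.sum_apply, inner_sum,
      ContinuousLinearMap.smul_apply, real_inner_smul_right,
      ContinuousLinearMap.comp_apply, ContinuousLinearMap.adjoint_inner_right]
    refine Finset.sum_congr rfl fun j _ => ?_
    rw [real_inner_self_eq_norm_sq]
  -- the filter is the fiber of ι
  have hfilter : ∀ i, Finset.univ.filter (fun j => Mb j i ≠ 0)
      = Finset.univ.filter (fun j => ι j = i) := by
    intro i
    refine Finset.filter_congr fun j _ => ?_
    simp [hι j i, eq_comm]
  -- each row sum collapses
  have hrow : ∀ j, (∑ i, Mb j i (x i)) = Mb j (ι j) (x (ι j)) := by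
    intro j
    refine Finset.sum_eq_single (ι j) (fun i _ hne => ?_) (by simp)
    have h0 : Mb j i = 0 := by
      by_contra h
      exact hne ((hι j i).1 h)
    simp [h0]
  -- regrouping
  set z : ∀ j, Ys j := fun j => Mb j (ι j) (x (ι j)) with hz
  have hregroup : ∑ j, σ j * ‖z j‖^2 = ∑ i, ⟪x i, T i (x i)⟫ := by
    rw [show (∑ i, ⟪x i, T i (x i)⟫)
        = ∑ i, ∑ j ∈ Finset.univ.filter (fun j => ι j = i), σ j * ‖z j‖^2 from ?_]
    · exact (Finset.sum_fiberwise Finset.univ ι fun j => σ j * ‖z j‖^2).symm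
    · refine Finset.sum_congr rfl fun i _ => ?_
      rw [hquad i, hfilter i]
      refine Finset.sum_congr rfl fun j hj => ?_
      have hji : ι j = i := (Finset.mem_filter.1 hj).2
      rw [hz]
      subst hji
      rfl
  -- spectral bound
  have hspec : ∀ i, ⟪x i, T i (x i)⟫ ≤ ρ i * ‖x i‖^2 :=
    fun i => rayleigh_le_spectralRadius (T i) (hTsa i) (x i)
  -- coefficient positivity
  have hρ0 : ∀ i, 0 ≤ ρ i := fun i => ENNReal.toReal_nonneg
  have hc : ∀ i, β i + ρ i < (τ i)⁻¹ := by
    intro i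
    have h := hstep i
    have hpos : 0 < β i + ρ i := by
      rcases lt_or_ge 0 (β i + ρ i) with h' | h'
      · exact h'
      · exfalso
        have : β i + ρ i = 0 := le_antisymm h' (add_nonneg (hβ i) (hρ0 i))
        rw [this] at h
        simp at h
        exact absurd h (not_lt.2 (hτ i).le)
    rw [one_div] at h
    have h2 : (β i + ρ i) * τ i < 1 := by
      calc (β i + ρ i) * τ i < (β i + ρ i) * (β i + ρ i)⁻¹ := by
            exact mul_lt_mul_of_pos_left h hpos
        _ = 1 := mul_inv_cancel₀ hpos.ne'
    have h3 : τ i * (τ i)⁻¹ = 1 := mul_inv_cancel₀ (hτ i).ne'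
    nlinarith [h2, h3, hτ i, hpos]
  by_cases hx : x = 0
  · -- x = 0, y ≠ 0
    have hy : y ≠ 0 := fun h => hxy ⟨hx, h⟩
    obtain ⟨j0, hj0⟩ := Function.ne_iff.1 hy
    subst hx
    simp only [Pi.zero_apply, map_zero, norm_zero, Finset.sum_const_zero,
      inner_zero_right]
    have hj0' : y j0 ≠ 0 := by simpa using hj0
    have hpos : 0 < ∑ j, (σ j)⁻¹ * ‖y j‖^2 := by
      refine Finset.sum_pos' (fun j _ => mul_nonneg (inv_nonneg.2 (hσ j).le) (sq_nonneg _))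
        ⟨j0, Finset.mem_univ j0, mul_pos (inv_pos.2 (hσ j0))
          (pow_pos (norm_pos_iff.mpr hj0') 2)⟩
    have h0 : ∑ i : Fin n, ((τ i)⁻¹ - β i) * (0:ℝ)^2 = 0 :=
      Finset.sum_eq_zero fun i _ => by norm_num
    rw [h0]
    linarith
  · -- x ≠ 0
    obtain ⟨i0, hi0⟩ := Function.ne_iff.1 hx
    -- cross term bound
    have hcross : ∀ j, -((1/2) * (σ j * ‖z j‖^2) + (1/2) * ((σ j)⁻¹ * ‖y j‖^2))
        ≤ ⟪y j, z j⟫ := by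
      intro j
      have h1 := abs_real_inner_le_norm (y j) (z j)
      have h2 : σ j * (σ j)⁻¹ = 1 := mul_inv_cancel₀ (hσ j).ne'
      have h3 := abs_le.1 h1
      nlinarith [sq_nonneg (σ j * ‖z j‖ - ‖y j‖), (hσ j), norm_nonneg (y j),
        norm_nonneg (z j), h3.1, mul_pos (hσ j) (hσ j)]
    have hC : -((1/2) * ∑ j, σ j * ‖z j‖^2 + (1/2) * ∑ j, (σ j)⁻¹ * ‖y j‖^2)
        ≤ ∑ j, ⟪y j, z j⟫ := by
      have := Finset.sum_le_sum (fun j (_ : j ∈ Finset.univ) => hcross j)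
      calc -((1/2) * ∑ j, σ j * ‖z j‖^2 + (1/2) * ∑ j, (σ j)⁻¹ * ‖y j‖^2)
          = ∑ j, -((1/2) * (σ j * ‖z j‖^2) + (1/2) * ((σ j)⁻¹ * ‖y j‖^2)) := by
            rw [Finset.sum_neg_distrib, Finset.sum_add_distrib, Finset.mul_sum,
              Finset.mul_sum]
        _ ≤ _ := this
    -- strict sum inequality
    have hstrict : ∑ i, ρ i * ‖x i‖^2 < ∑ i, ((τ i)⁻¹ - β i) * ‖x i‖^2 := by
      refine Finset.sum_lt_sum (fun i _ => ?_) ⟨i0, Finset.mem_univ i0, ?_⟩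
      · have := (hc i).le
        nlinarith [sq_nonneg ‖x i‖, norm_nonneg (x i)]
      · have hxi : 0 < ‖x i0‖^2 := pow_pos (norm_pos_iff.mpr hi0) 2
        have := hc i0
        nlinarith
    have hS2 : ∑ j, σ j * ‖z j‖^2 ≤ ∑ i, ρ i * ‖x i‖^2 := by
      rw [hregroup]
      exact Finset.sum_le_sum fun i _ => hspec i
    have hcrossterm : ∑ j, ⟪y j, (∑ i, Mb j i (x i))⟫ = ∑ j, ⟪y j, z j⟫ := by
      refine Finset.sum_congr rfl fun j _ => ?_
      rw [hrow j, hz]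
    rw [hcrossterm]
    linarith [hC, hS2, hstrict]
end

section
/- Let (x*, y*) be a saddle point of the Lagrangian L(x,y) = f(x) + g(x) + ⟨y, Mx⟩ - h*(y), equivalently 0 ∈ ∇f(x*) + ∂g(x*) + M*y* and 0 ∈ -Mx* + ∂h*(y*). Given (x,y), define ȳ = prox_{σ,h*}(y + D(σ)Mx) and x̄ = prox_{τ,g}(x - D(τ)(∇f(x) + M*(2ȳ - y))). Then ⟨∇f(x*) - ∇f(x), x* - x̄⟩ + V(z̄ - z) ≤ V(z - z*) - V(z̄ - z*), where z = (x,y), z* = (x*,y*), z̄ = (x̄,ȳ), and V(x,y) = (1/2)‖x‖²_{τ^{-1}} + ⟨y, Mx⟩ + (1/2)‖y‖²_{σ^{-1}}. -/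
open scoped RealInnerProductSpace

/-- The weighted quadratic form
`V(a,b) = (1/2)‖a‖²_{τ⁻¹} + ⟨b, Ma⟩ + (1/2)‖b‖²_{σ⁻¹}`. -/
noncomputable def Vform {n p : ℕ} (Xs : Fin n → Type) (Ys : Fin p → Type)
    [∀ i, NormedAddCommGroup (Xs i)] [∀ i, InnerProductSpace ℝ (Xs i)]
    [∀ j, NormedAddCommGroup (Ys j)] [∀ j, InnerProductSpace ℝ (Ys j)]
    (Mb : ∀ j i, Xs i →L[ℝ] Ys j) (τ : Fin n → ℝ) (σ : Fin p → ℝ)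
    (a : ∀ i, Xs i) (b : ∀ j, Ys j) : ℝ :=
  (1/2) * ∑ i, (τ i)⁻¹ * ‖a i‖^2
    + ∑ j, ⟪b j, (∑ i, Mb j i (a i))⟫
    + (1/2) * ∑ j, (σ j)⁻¹ * ‖b j‖^2

section Aux

/-- Polarization-type identity. -/
lemma polar_id {E : Type*} [NormedAddCommGroup E] [InnerProductSpace ℝ E] (a b c : E) :
    ‖c - a‖^2 + ‖c - b‖^2 = ‖a - b‖^2 + 2*⟪a - c, b - c⟫ := by
  have h := norm_sub_sq_real (c - a) (c - b)
  have e1 : (c - a) - (c - b) = b - a := by abel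
  have e2 : ⟪c - a, c - b⟫ = ⟪a - c, b - c⟫ := by
    rw [show c - a = -(a - c) by abel, show c - b = -(b - c) by abel, inner_neg_neg]
  rw [e1, e2, norm_sub_rev b a] at h
  linarith

variable {n : ℕ} {Xs : Fin n → Type} [∀ i, NormedAddCommGroup (Xs i)]
  [∀ i, InnerProductSpace ℝ (Xs i)]

/-- Subgradient inequality at a prox point, from its minimization characterization. -/
lemma prox_subgrad (γ : Fin n → ℝ) (hγ : ∀ i, 0 < γ i)
    (G : (∀ i, Xs i) → ℝ) (hG : ConvexOn ℝ Set.univ G)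
    (c w : ∀ i, Xs i)
    (hw : ∀ u, G w + (1/2) * ∑ i, (γ i)⁻¹ * ‖w i - c i‖^2
        ≤ G u + (1/2) * ∑ i, (γ i)⁻¹ * ‖u i - c i‖^2)
    (u : ∀ i, Xs i) :
    G w + ∑ i, (γ i)⁻¹ * ⟪c i - w i, u i - w i⟫ ≤ G u := by
  set C : ℝ := (1/2) * ∑ i, (γ i)⁻¹ * ‖u i - w i‖^2 with hCdef
  set P : ℝ := ∑ i, (γ i)⁻¹ * ⟪w i - c i, u i - w i⟫ with hPdef
  have hC0 : 0 ≤ C := by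
    apply mul_nonneg (by norm_num)
    exact Finset.sum_nonneg fun i _ => mul_nonneg (inv_nonneg.mpr (hγ i).le) (sq_nonneg _)
  have hPneg : ∑ i, (γ i)⁻¹ * ⟪c i - w i, u i - w i⟫ = -P := by
    rw [hPdef, ← Finset.sum_neg_distrib]
    refine Finset.sum_congr rfl fun i _ => ?_
    rw [show c i - w i = -(w i - c i) by abel, inner_neg_left]; ring
  rw [hPneg]
  have key : ∀ t : ℝ, 0 < t → t ≤ 1 → G w ≤ G u + P + t * C := by
    intro t ht0 ht1
    set ut : ∀ i, Xs i := fun i => w i + t • (u i - w i) with hut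
    have hconv : G ut ≤ (1 - t) * G w + t * G u := by
      have h := hG.2 (Set.mem_univ w) (Set.mem_univ u) (show (0:ℝ) ≤ 1 - t by linarith) ht0.le (by ring)
      have : (1 - t) • w + t • u = ut := by
        funext i; simp only [Pi.add_apply, Pi.smul_apply, hut]; module
      rwa [this] at h
    have hexp : ∀ i, ‖ut i - c i‖^2
        = ‖w i - c i‖^2 + 2*t*⟪w i - c i, u i - w i⟫ + t^2 * ‖u i - w i‖^2 := by
      intro i
      have h1 : ut i - c i = (w i - c i) + t • (u i - w i) := by simp only [hut]; abel
      rw [h1, norm_add_sq_real, real_inner_smul_right, norm_smul, Real.norm_eq_abs,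
        mul_pow, sq_abs]
      ring
    have hsum : ∑ i, (γ i)⁻¹ * ‖ut i - c i‖^2
        = ∑ i, (γ i)⁻¹ * ‖w i - c i‖^2 + 2*t*P + t^2 * (2*C) := by
      calc ∑ i, (γ i)⁻¹ * ‖ut i - c i‖^2
          = ∑ i, ((γ i)⁻¹ * ‖w i - c i‖^2 + (2*t) * ((γ i)⁻¹ * ⟪w i - c i, u i - w i⟫)
              + t^2 * ((γ i)⁻¹ * ‖u i - w i‖^2)) := by
            refine Finset.sum_congr rfl fun i _ => ?_
            rw [hexp i]; ring
        _ = ∑ i, (γ i)⁻¹ * ‖w i - c i‖^2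
              + (2*t) * ∑ i, ((γ i)⁻¹ * ⟪w i - c i, u i - w i⟫)
              + t^2 * ∑ i, ((γ i)⁻¹ * ‖u i - w i‖^2) := by
            rw [Finset.sum_add_distrib, Finset.sum_add_distrib, ← Finset.mul_sum,
              ← Finset.mul_sum]
        _ = _ := by rw [hPdef, hCdef]; ring
    have hmin := hw ut
    rw [hsum] at hmin
    have h2 : t * G w ≤ t * (G u + P + t * C) := by nlinarith
    exact le_of_mul_le_mul_left (by linarith [h2]) ht0
  refine le_of_forall_sub_le fun ε hε => ?_
  rcases eq_or_lt_of_le hC0 with hC | hC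
  · have := key 1 one_pos le_rfl
    rw [← hC] at this; linarith
  · set t : ℝ := min 1 (ε / C) with htdef
    have ht0 : 0 < t := lt_min one_pos (div_pos hε hC)
    have ht1 : t ≤ 1 := min_le_left _ _
    have htC : t * C ≤ ε := by
      have h1 : t ≤ ε / C := min_le_right _ _
      calc t * C ≤ (ε / C) * C := mul_le_mul_of_nonneg_right h1 hC0
        _ = ε := by field_simp
    linarith [key t ht0 ht1]

end Aux

section Bil
variable {n p : ℕ} {Xs : Fin n → Type} {Ys : Fin p → Type}
  [∀ i, NormedAddCommGroup (Xs i)] [∀ i, InnerProductSpace ℝ (Xs i)]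
  [∀ j, NormedAddCommGroup (Ys j)] [∀ j, InnerProductSpace ℝ (Ys j)]

/-- The bilinear form `⟨b, Ma⟩`. -/
noncomputable def mbil (Mb : ∀ j i, Xs i →L[ℝ] Ys j)
    (b : ∀ j, Ys j) (a : ∀ i, Xs i) : ℝ :=
  ∑ j, ⟪b j, ∑ i, Mb j i (a i)⟫

lemma mbil_sub_left (Mb : ∀ j i, Xs i →L[ℝ] Ys j) (b b' : ∀ j, Ys j) (a : ∀ i, Xs i) :
    mbil Mb (fun j => b j - b' j) a = mbil Mb b a - mbil Mb b' a := by
  simp [mbil, inner_sub_left, Finset.sum_sub_distrib]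

lemma mbil_sub_right (Mb : ∀ j i, Xs i →L[ℝ] Ys j) (b : ∀ j, Ys j) (a a' : ∀ i, Xs i) :
    mbil Mb b (fun i => a i - a' i) = mbil Mb b a - mbil Mb b a' := by
  simp [mbil, map_sub, Finset.sum_sub_distrib, inner_sub_right]

lemma mbil_smul_left (Mb : ∀ j i, Xs i →L[ℝ] Ys j) (r : ℝ) (b : ∀ j, Ys j) (a : ∀ i, Xs i) :
    mbil Mb (fun j => r • b j) a = r * mbil Mb b a := by
  simp [mbil, real_inner_smul_left, Finset.mul_sum]

lemma mbil_adjoint [∀ i, FiniteDimensional ℝ (Xs i)] [∀ j, FiniteDimensional ℝ (Ys j)]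
    (Mb : ∀ j i, Xs i →L[ℝ] Ys j) (b : ∀ j, Ys j) (a : ∀ i, Xs i) :
    ∑ i, ⟪∑ j, ContinuousLinearMap.adjoint (Mb j i) (b j), a i⟫ = mbil Mb b a := by
  simp only [mbil, sum_inner, inner_sum, ContinuousLinearMap.adjoint_inner_left]
  exact Finset.sum_comm

end Bil

lemma Vform_eq {n p : ℕ} (Xs : Fin n → Type) (Ys : Fin p → Type)
    [∀ i, NormedAddCommGroup (Xs i)] [∀ i, InnerProductSpace ℝ (Xs i)]
    [∀ j, NormedAddCommGroup (Ys j)] [∀ j, InnerProductSpace ℝ (Ys j)]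
    (Mb : ∀ j i, Xs i →L[ℝ] Ys j) (τ : Fin n → ℝ) (σ : Fin p → ℝ)
    (a : ∀ i, Xs i) (b : ∀ j, Ys j) :
    Vform Xs Ys Mb τ σ a b
      = (1/2) * ∑ i, (τ i)⁻¹ * ‖a i‖^2 + mbil Mb b a
        + (1/2) * ∑ j, (σ j)⁻¹ * ‖b j‖^2 := rfl

/-- (Lemma 1 of the paper.) Let `(x*, y*)` be a saddle point of the Lagrangian,
i.e. `-∇f(x*) - M*y* ∈ ∂g(x*)` and `Mx* ∈ ∂h*(y*)`. Given `(x,y)`, let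
`ȳ = prox_{σ,h*}(y + D(σ)Mx)` and `x̄ = prox_{τ,g}(x - D(τ)(∇f(x) + M*(2ȳ - y)))`
(characterized as minimizers of the corresponding strongly convex problems). Then
`⟨∇f(x*) - ∇f(x), x* - x̄⟩ + V(z̄ - z) ≤ V(z - z*) - V(z̄ - z*)`. -/
theorem stmt2 {n p : ℕ}
    (Xs : Fin n → Type) (Ys : Fin p → Type)
    [∀ i, NormedAddCommGroup (Xs i)] [∀ i, InnerProductSpace ℝ (Xs i)]
    [∀ i, FiniteDimensional ℝ (Xs i)]
    [∀ j, NormedAddCommGroup (Ys j)] [∀ j, InnerProductSpace ℝ (Ys j)]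
    [∀ j, FiniteDimensional ℝ (Ys j)]
    (Mb : ∀ j i, Xs i →L[ℝ] Ys j)
    (τ : Fin n → ℝ) (σ : Fin p → ℝ) (hτ : ∀ i, 0 < τ i) (hσ : ∀ j, 0 < σ j)
    -- f convex differentiable with gradient `gradf`:
    (f : (∀ i, Xs i) → ℝ) (gradf : (∀ i, Xs i) → ∀ i, Xs i)
    (hf : ∀ x u, f x + ∑ i, ⟪gradf x i, u i - x i⟫ ≤ f u)
    -- g and h* proper closed convex (here finite-valued convex):
    (g : (∀ i, Xs i) → ℝ) (hstar : (∀ j, Ys j) → ℝ)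
    (hg : ConvexOn ℝ Set.univ g) (hh : ConvexOn ℝ Set.univ hstar)
    -- the saddle point (x*, y*):
    (xs : ∀ i, Xs i) (ys : ∀ j, Ys j)
    (hsad1 : ∀ u, g xs + ∑ i, ⟪-(gradf xs i)
        - ∑ j, ContinuousLinearMap.adjoint (Mb j i) (ys j), u i - xs i⟫ ≤ g u)
    (hsad2 : ∀ v, hstar ys + ∑ j, ⟪(∑ i, Mb j i (xs i)), v j - ys j⟫ ≤ hstar v)
    -- the current point (x, y) and the prox points ȳ, x̄:
    (x : ∀ i, Xs i) (y : ∀ j, Ys j) (ybar : ∀ j, Ys j) (xbar : ∀ i, Xs i)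
    (hybar : ∀ v, hstar ybar
        + (1/2) * ∑ j, (σ j)⁻¹ * ‖ybar j - (y j + σ j • ∑ i, Mb j i (x i))‖^2
      ≤ hstar v + (1/2) * ∑ j, (σ j)⁻¹ * ‖v j - (y j + σ j • ∑ i, Mb j i (x i))‖^2)
    (hxbar : ∀ u, g xbar
        + (1/2) * ∑ i, (τ i)⁻¹ * ‖xbar i - (x i - τ i • (gradf x i
            + ∑ j, ContinuousLinearMap.adjoint (Mb j i) ((2:ℝ) • ybar j - y j)))‖^2
      ≤ g u + (1/2) * ∑ i, (τ i)⁻¹ * ‖u i - (x i - τ i • (gradf x i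
            + ∑ j, ContinuousLinearMap.adjoint (Mb j i) ((2:ℝ) • ybar j - y j)))‖^2) :
    ∑ i, ⟪gradf xs i - gradf x i, xs i - xbar i⟫
        + Vform Xs Ys Mb τ σ (fun i => xbar i - x i) (fun j => ybar j - y j)
      ≤ Vform Xs Ys Mb τ σ (fun i => x i - xs i) (fun j => y j - ys j)
        - Vform Xs Ys Mb τ σ (fun i => xbar i - xs i) (fun j => ybar j - ys j) := by
  classical
  -- prox subgradient inequalities
  have I1 := prox_subgrad σ hσ hstar hh
      (fun j => y j + σ j • ∑ i, Mb j i (x i)) ybar hybar ys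
  have I2 := prox_subgrad τ hτ g hg
      (fun i => x i - τ i • (gradf x i
        + ∑ j, ContinuousLinearMap.adjoint (Mb j i) ((2:ℝ) • ybar j - y j))) xbar hxbar xs
  -- rewrite the Y-side subgradient inequality
  have e1 : ∑ j, (σ j)⁻¹ * ⟪(y j + σ j • ∑ i, Mb j i (x i)) - ybar j, ys j - ybar j⟫
      = ∑ j, (σ j)⁻¹ * ⟪y j - ybar j, ys j - ybar j⟫
        + mbil Mb (fun j => ys j - ybar j) x := by
    rw [mbil, ← Finset.sum_add_distrib]
    refine Finset.sum_congr rfl fun j _ => ?_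
    rw [show (y j + σ j • ∑ i, Mb j i (x i)) - ybar j
        = (y j - ybar j) + σ j • ∑ i, Mb j i (x i) by abel,
      inner_add_left, real_inner_smul_left, mul_add,
      inv_mul_cancel_left₀ (hσ j).ne', real_inner_comm (∑ i, Mb j i (x i)) (ys j - ybar j)]
  rw [e1] at I1
  -- rewrite the X-side subgradient inequality
  have e2 : ∑ i, (τ i)⁻¹ * ⟪(x i - τ i • (gradf x i
        + ∑ j, ContinuousLinearMap.adjoint (Mb j i) ((2:ℝ) • ybar j - y j))) - xbar i,
        xs i - xbar i⟫
      = ∑ i, (τ i)⁻¹ * ⟪x i - xbar i, xs i - xbar i⟫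
        - ∑ i, ⟪gradf x i, xs i - xbar i⟫
        - mbil Mb (fun j => (2:ℝ) • ybar j - y j) (fun i => xs i - xbar i) := by
    rw [← mbil_adjoint, ← Finset.sum_sub_distrib, ← Finset.sum_sub_distrib]
    refine Finset.sum_congr rfl fun i _ => ?_
    rw [show (x i - τ i • (gradf x i
          + ∑ j, ContinuousLinearMap.adjoint (Mb j i) ((2:ℝ) • ybar j - y j))) - xbar i
        = (x i - xbar i) - τ i • (gradf x i
          + ∑ j, ContinuousLinearMap.adjoint (Mb j i) ((2:ℝ) • ybar j - y j)) by abel,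
      inner_sub_left, real_inner_smul_left, mul_sub,
      inv_mul_cancel_left₀ (hτ i).ne', inner_add_left]
    ring
  rw [e2] at I2
  -- saddle point inequalities at the prox points
  have S1 := hsad1 xbar
  have S2 := hsad2 ybar
  have e3 : ∑ i, ⟪-(gradf xs i)
        - ∑ j, ContinuousLinearMap.adjoint (Mb j i) (ys j), xbar i - xs i⟫
      = -∑ i, ⟪gradf xs i, xbar i - xs i⟫ - mbil Mb ys (fun i => xbar i - xs i) := by
    rw [← mbil_adjoint, ← Finset.sum_neg_distrib, ← Finset.sum_sub_distrib]
    refine Finset.sum_congr rfl fun i _ => ?_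
    rw [inner_sub_left, inner_neg_left]
  rw [e3] at S1
  have e4 : ∑ j, ⟪(∑ i, Mb j i (xs i)), ybar j - ys j⟫
      = mbil Mb (fun j => ybar j - ys j) xs := by
    rw [mbil]; exact Finset.sum_congr rfl fun j _ => real_inner_comm _ _
  rw [e4] at S2
  -- norm identities
  have eqX : ∑ i, ((τ i)⁻¹ * ‖xbar i - x i‖^2) + ∑ i, ((τ i)⁻¹ * ‖xbar i - xs i‖^2)
      = ∑ i, ((τ i)⁻¹ * ‖x i - xs i‖^2)
        + 2 * ∑ i, (τ i)⁻¹ * ⟪x i - xbar i, xs i - xbar i⟫ := by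
    rw [← Finset.sum_add_distrib, Finset.mul_sum, ← Finset.sum_add_distrib]
    refine Finset.sum_congr rfl fun i _ => ?_
    have h := polar_id (x i) (xs i) (xbar i)
    linear_combination (τ i)⁻¹ * h
  have eqY : ∑ j, ((σ j)⁻¹ * ‖ybar j - y j‖^2) + ∑ j, ((σ j)⁻¹ * ‖ybar j - ys j‖^2)
      = ∑ j, ((σ j)⁻¹ * ‖y j - ys j‖^2)
        + 2 * ∑ j, (σ j)⁻¹ * ⟪y j - ybar j, ys j - ybar j⟫ := by
    rw [← Finset.sum_add_distrib, Finset.mul_sum, ← Finset.sum_add_distrib]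
    refine Finset.sum_congr rfl fun j _ => ?_
    have h := polar_id (y j) (ys j) (ybar j)
    linear_combination (σ j)⁻¹ * h
  -- gradient bookkeeping
  have e5 : ∑ i, ⟪gradf xs i - gradf x i, xs i - xbar i⟫
      = ∑ i, ⟪gradf xs i, xs i - xbar i⟫ - ∑ i, ⟪gradf x i, xs i - xbar i⟫ := by
    rw [← Finset.sum_sub_distrib]
    exact Finset.sum_congr rfl fun i _ => inner_sub_left _ _ _
  have e6 : ∑ i, ⟪gradf xs i, xbar i - xs i⟫ = -∑ i, ⟪gradf xs i, xs i - xbar i⟫ := by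
    rw [← Finset.sum_neg_distrib]
    refine Finset.sum_congr rfl fun i _ => ?_
    rw [show xbar i - xs i = -(xs i - xbar i) by abel, inner_neg_right]
  rw [Vform_eq, Vform_eq, Vform_eq, e5]
  simp only [mbil_sub_left, mbil_sub_right, mbil_smul_left] at I1 I2 S1 S2 ⊢
  linarith [I1, I2, S1, S2, eqX, eqY, e6]
end

section
/- Consider minimizing f(x) = (1/2)(x^{(1)} + x^{(2)} + x^{(3)} - 1)² over ℝ³ via randomized coordinate descent: from x₀ = 0, pick i uniformly in {1,2,3} and set x₁^{(i)} = x₀^{(i)} - τ(x₀^{(1)} + x₀^{(2)} + x₀^{(3)} - 1), keeping other coordinates fixed. With x* = (1/3, 1/3, 1/3) a minimizer, one has E‖x₁ - x*‖² = (τ - 1/3)² + 2/9 and ‖x₀ - x*‖² = 1/3; hence E‖x₁ - x*‖² > ‖x₀ - x*‖² whenever τ > 2/3. In particular, for 2/3 < τ < 1 the sequence E‖x_k - x*‖² is not monotonically decreasing. -/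
/-- Failure of stochastic Fejér monotonicity for randomized coordinate descent
on `f(x) = (1/2)(x¹ + x² + x³ - 1)²` from `x₀ = 0` with step size `τ`. With
`x* = (1/3,1/3,1/3)`, one has `E‖x₁ - x*‖² = (τ - 1/3)² + 2/9` and `‖x₀ - x*‖² = 1/3`;
hence `E‖x₁ - x*‖² > ‖x₀ - x*‖²` whenever `τ > 2/3`. -/
theorem stmt4 (τ : ℝ) (hτ : 0 < τ)
    (x0 : EuclideanSpace ℝ (Fin 3)) (hx0 : x0 = 0)
    (xstar : EuclideanSpace ℝ (Fin 3)) (hxstar : ∀ l, xstar l = 1/3)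
    (x1 : Fin 3 → EuclideanSpace ℝ (Fin 3))
    (hx1 : ∀ i l, x1 i l = if l = i then x0 l - τ * (x0 0 + x0 1 + x0 2 - 1) else x0 l) :
    ((1/3 : ℝ) * ∑ i : Fin 3, ‖x1 i - xstar‖^2 = (τ - 1/3)^2 + 2/9)
    ∧ ‖x0 - xstar‖^2 = (1/3 : ℝ)
    ∧ (2/3 < τ → ‖x0 - xstar‖^2 < (1/3 : ℝ) * ∑ i : Fin 3, ‖x1 i - xstar‖^2) := by
  have hn : ∀ y : EuclideanSpace ℝ (Fin 3), ‖y‖^2 = ∑ l, (y l)^2 := fun y => by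
    rw [EuclideanSpace.norm_eq, Real.sq_sqrt (by positivity)]; simp [sq_abs]
  have h0 : ∀ l, x0 l = 0 := by intro l; rw [hx0]; rfl
  have key : ∀ z : EuclideanSpace ℝ (Fin 3), ‖z - xstar‖^2 = ∑ l, (z l - 1/3)^2 := by
    intro z; rw [hn]; congr 1; ext l
    simp [hxstar]
  have hA : (1/3:ℝ) * ∑ i : Fin 3, ‖x1 i - xstar‖^2 = (τ - 1/3)^2 + 2/9 := by
    simp only [key, hx1, h0, Fin.sum_univ_three]
    norm_num [Fin.ext_iff]
    ring
  have hB : ‖x0 - xstar‖^2 = (1/3:ℝ) := by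
    simp only [key, h0, Fin.sum_univ_three]
    norm_num
  refine ⟨hA, hB, fun hτ2 => ?_⟩
  rw [hA, hB]
  nlinarith [sq_nonneg (τ - 2/3)]
end

section
/- With h̄ = h ∘ (D(m)S), σ_j > 0, and σ̃ the weight vector assigning weight m_jσ_j to every copy in Y_j^{I(j)}, the proximity operator of h̄* in the weighted norm satisfies, for every 𝒚 ∈ 𝒀: prox_{σ̃, h̄*}(𝒚) is the consensus element whose j-th block equals prox_{σ,h*}^{(j)}(S(𝒚)) replicated over I(j). That is, prox_{σ̃,h̄*}(𝒚)^{(j)}(i) = prox_{σ,h*}(S𝒚)^{(j)} for all j and all i ∈ I(j). -/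
/-!
Write `Σ` for the blockwise sum, so that `h̄ = h ∘ Σ` and the block pairing satisfies
`⟨D v, u⟩ = ⟨v, Σ u⟩` for the replication map `D`. As `Σ` is onto, `h̄* (D v) = h* v`. Off the
consensus subspace `h̄*` is `+∞`: for `e = w - D (mean w)` the function `h̄` is constant along
`e ∈ ker Σ`, while `⟨w, e⟩ = ‖e‖² > 0`. On consensus points the `σ̃⁻¹`-weighted distance to `𝒚`
is, up to an additive constant, the `σ⁻¹`-weighted distance to the block means `S𝒚`. So the
prox `𝒒` is `D c` for a minimizer `c` of `h* + ½‖· - S𝒚‖²_{σ⁻¹}`, and such a minimizer is unique: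
`h*` is convex, the quadratic is strictly convex, and `h*` is proper because the closed proper
convex `h` has a continuous affine minorant (Hahn–Banach).
-/

/-- Fenchel conjugate of an extended-real-valued function with respect to a given
real pairing: `F*(φ) = sup_y ⟨φ, y⟩ - F(y)`. -/
noncomputable def conjP {E : Type*} (pair : E → E → ℝ) (F : E → EReal) (φ : E) : EReal :=
  ⨆ y, ((pair φ y : ℝ) : EReal) - F y

open scoped RealInnerProductSpace

lemma EReal.ne_top_of_add_coe_le_add_coe {a b : EReal} {x y : ℝ} (h : a + x ≤ b + y)
    (hb : b ≠ ⊤) : a ≠ ⊤ := by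
  rintro rfl
  rw [EReal.top_add_coe, top_le_iff] at h
  exact (EReal.add_lt_top hb (EReal.coe_ne_top y)).ne h

lemma EReal.add_coe_add_le_add_coe_add_iff {a b : EReal} {x y k : ℝ} :
    a + ((x + k : ℝ) : EReal) ≤ b + ((y + k : ℝ) : EReal) ↔ a + x ≤ b + y := by
  rw [EReal.coe_add, EReal.coe_add, ← add_assoc, ← add_assoc]
  exact (EReal.addLECancellable_coe k).add_le_add_iff_right

section Conjugate

variable {E : Type*}

lemma le_conjP (pair : E → E → ℝ) (F : E → EReal) (φ y : E) :
    ((pair φ y : ℝ) : EReal) - F y ≤ conjP pair F φ :=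
  le_iSup (fun y => ((pair φ y : ℝ) : EReal) - F y) y

lemma conjP_ne_bot (pair : E → E → ℝ) {F : E → EReal} (hF : ∃ y, F y ≠ ⊤) (φ : E) :
    conjP pair F φ ≠ ⊥ := by
  obtain ⟨y, hy⟩ := hF
  refine ne_bot_of_le_ne_bot ?_ (le_conjP pair F φ y)
  generalize F y = c at hy ⊢
  induction c using EReal.rec <;> simp_all [← EReal.coe_sub]

lemma conjP_comp_of_surjective {G : Type*} {pair : E → E → ℝ} {pairG : G → G → ℝ}
    {S : E → G} (hS : Function.Surjective S) (F : G → EReal) {ψ : E} {φ : G}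
    (hψ : ∀ u, pair ψ u = pairG φ (S u)) : conjP pair (F ∘ S) ψ = conjP pairG F φ := by
  simp only [conjP, ← hS.iSup_comp (g := fun y => ((pairG φ y : ℝ) : EReal) - F y),
    Function.comp_apply, hψ]

variable [AddCommGroup E] [Module ℝ E]

lemma conjP_comp_eq_top_of_apply_eq_zero {G : Type*} [AddCommGroup G] [Module ℝ G]
    (B : E →ₗ[ℝ] E →ₗ[ℝ] ℝ) {S : E →ₗ[ℝ] G} (hS : Function.Surjective S) {F : G → EReal}
    (hF : ∃ y, F y ≠ ⊤) {φ e : E} (he : S e = 0) (hφe : B φ e ≠ 0) :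
    conjP (B · ·) (F ∘ S) φ = ⊤ := by
  obtain ⟨y₀, hy₀⟩ := hF
  obtain ⟨r₀, hr₀, -⟩ := EReal.lt_iff_exists_real_btwn.1 (lt_top_iff_ne_top.2 hy₀)
  obtain ⟨u₀, rfl⟩ := hS y₀
  refine (EReal.eq_top_iff_forall_lt _).2 fun r => ?_
  set t := (r + 1 + r₀ - B φ u₀) / B φ e
  have hval : B φ (u₀ + t • e) - r₀ = r + 1 := by
    simp only [map_add, map_smul, smul_eq_mul, t, div_mul_cancel₀ _ hφe]
    ring
  calc (r : EReal) < ((r + 1 : ℝ) : EReal) := by exact_mod_cast lt_add_one r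
    _ = ((B φ (u₀ + t • e) : ℝ) : EReal) - r₀ := by rw [← EReal.coe_sub, hval]
    _ ≤ ((B φ (u₀ + t • e) : ℝ) : EReal) - (F ∘ S) (u₀ + t • e) := by
      refine EReal.sub_le_sub le_rfl ?_
      simpa [he] using hr₀.le
    _ ≤ conjP (B · ·) (F ∘ S) φ := le_conjP (B · ·) (F ∘ S) φ _

lemma conjP_smul_add_smul_le (B : E →ₗ[ℝ] E →ₗ[ℝ] ℝ) (F : E → EReal) {a b : E} {x y s t : ℝ}
    (ha : conjP (B · ·) F a ≤ x) (hb : conjP (B · ·) F b ≤ y) (hs : 0 ≤ s) (ht : 0 ≤ t)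
    (hst : s + t = 1) :
    conjP (B · ·) F (s • a + t • b) ≤ ((s * x + t * y : ℝ) : EReal) := by
  refine iSup_le fun z => ?_
  have hza := (le_conjP _ F a z).trans ha
  have hzb := (le_conjP _ F b z).trans hb
  change ((B (s • a + t • b) z : ℝ) : EReal) - F z ≤ _
  generalize F z = c at hza hzb ⊢
  induction c using EReal.rec with
  | bot => simp at hza
  | top => simp
  | coe c =>
    rw [← EReal.coe_sub] at hza hzb ⊢
    norm_cast at hza hzb ⊢
    simp only [map_add, map_smul, LinearMap.add_apply, LinearMap.smul_apply, smul_eq_mul]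
    have hc : c = s * c + t * c := by rw [← add_mul, hst, one_mul]
    linarith [mul_le_mul_of_nonneg_left hza hs, mul_le_mul_of_nonneg_left hzb ht]

/-- At the midpoint of two minimizers of `F* + Q`, the convex `F*` stays below the average of
its values while the strictly convex `Q` drops strictly below it. -/
theorem eq_of_forall_conjP_add_le {B : E →ₗ[ℝ] E →ₗ[ℝ] ℝ} {F : E → EReal}
    (hF : ∃ y, F y ≠ ⊤) {Q : E → ℝ} (hQ : StrictConvexOn ℝ Set.univ Q) {a b : E}
    (hfin : conjP (B · ·) F a ≠ ⊤)
    (ha : ∀ v, conjP (B · ·) F a + Q a ≤ conjP (B · ·) F v + Q v)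
    (hb : ∀ v, conjP (B · ·) F b + Q b ≤ conjP (B · ·) F v + Q v) : a = b := by
  by_contra hab
  set f := conjP (B · ·) F
  have hfin' : f b ≠ ⊤ := EReal.ne_top_of_add_coe_le_add_coe (hb a) hfin
  have hxa : f a = (f a).toReal := (EReal.coe_toReal hfin (conjP_ne_bot _ hF a)).symm
  have hxb : f b = (f b).toReal := (EReal.coe_toReal hfin' (conjP_ne_bot _ hF b)).symm
  set m := (1 / 2 : ℝ) • a + (1 / 2 : ℝ) • b
  have hfm := conjP_smul_add_smul_le B F hxa.le hxb.le (by norm_num) (by norm_num)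
    (by norm_num : (1 / 2 : ℝ) + 1 / 2 = 1)
  have hQm := hQ.2 (Set.mem_univ a) (Set.mem_univ b) hab (by norm_num : (0 : ℝ) < 1 / 2)
    (by norm_num : (0 : ℝ) < 1 / 2) (by norm_num)
  have hmin_le : ∀ c, f c = (f c).toReal → (∀ v, f c + Q c ≤ f v + Q v) →
      (f c).toReal + Q c ≤ (1 / 2 * (f a).toReal + 1 / 2 * (f b).toReal) + Q m := by
    intro c hc hcmin
    have := (hcmin m).trans (add_le_add_left hfm _)
    rw [hc] at this
    exact_mod_cast this
  have h1 := hmin_le a hxa ha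
  have h2 := hmin_le b hxb hb
  simp only [smul_eq_mul] at hQm
  linarith

end Conjugate

section Minorant

variable {E : Type*} [NormedAddCommGroup E] {F : E → EReal}

lemma convex_epigraph_real [NormedSpace ℝ E]
    (hconv : ∀ (y z : E) (t : ℝ), 0 ≤ t → t ≤ 1 →
      F (t • y + (1 - t) • z) ≤ ((t : ℝ) : EReal) * F y + (((1 - t : ℝ)) : EReal) * F z) :
    Convex ℝ {z : E × ℝ | F z.1 ≤ z.2} := by
  rintro ⟨y, r⟩ hy ⟨z, s⟩ hz a b ha hb hab
  obtain rfl : b = 1 - a := by linarith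
  simp only [Set.mem_ofPred_eq, Prod.fst_add, Prod.snd_add, Prod.smul_fst, Prod.smul_snd,
    smul_eq_mul] at hy hz ⊢
  calc F (a • y + (1 - a) • z) ≤ (a : EReal) * F y + ((1 - a : ℝ) : EReal) * F z :=
        hconv y z a ha (by linarith)
    _ ≤ (a : EReal) * r + ((1 - a : ℝ) : EReal) * s :=
        add_le_add (mul_le_mul_of_nonneg_left hy (by exact_mod_cast ha))
          (mul_le_mul_of_nonneg_left hz (by exact_mod_cast hb))
    _ = ((a * r + (1 - a) * s : ℝ) : EReal) := by norm_cast

lemma isClosed_epigraph_real (hlsc : LowerSemicontinuous F) :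
    IsClosed {z : E × ℝ | F z.1 ≤ z.2} :=
  (lowerSemicontinuous_iff_isClosed_epigraph.1 hlsc).preimage
    (continuous_fst.prodMk (continuous_coe_real_ereal.comp continuous_snd))

/-- Separate the closed convex epigraph from a point lying below it. -/
lemma exists_affine_minorant [NormedSpace ℝ E] (hproper : ∃ y, F y ≠ ⊤) (hnebot : ∀ y, F y ≠ ⊥)
    (hconv : ∀ (y z : E) (t : ℝ), 0 ≤ t → t ≤ 1 →
      F (t • y + (1 - t) • z) ≤ ((t : ℝ) : EReal) * F y + (((1 - t : ℝ)) : EReal) * F z)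
    (hlsc : LowerSemicontinuous F) :
    ∃ (g : E →L[ℝ] ℝ) (c : ℝ), ∀ y, ((g y + c : ℝ) : EReal) ≤ F y := by
  obtain ⟨y₀, hy₀⟩ := hproper
  obtain ⟨r₀, hr₀⟩ : ∃ r : ℝ, F y₀ = r := ⟨_, (EReal.coe_toReal hy₀ (hnebot y₀)).symm⟩
  have hnot : (y₀, r₀ - 1) ∉ {z : E × ℝ | F z.1 ≤ z.2} := by
    rw [Set.mem_ofPred_eq, hr₀, EReal.coe_le_coe_iff]
    linarith
  obtain ⟨f, u, hfu, hsep⟩ := geometric_hahn_banach_point_closed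
    (convex_epigraph_real hconv) (isClosed_epigraph_real hlsc) hnot
  set g₀ := f.comp (ContinuousLinearMap.inl ℝ E ℝ)
  set a := f (0, 1)
  have hf : ∀ y t, f (y, t) = g₀ y + t * a := fun y t => by
    rw [show ((y, t) : E × ℝ) = (y, 0) + t • ((0 : E), (1 : ℝ)) by simp, map_add, map_smul]
    rfl
  have hmem : ∀ y, F y ≠ ⊤ → u < g₀ y + (F y).toReal * a := fun y hy =>
    hf y _ ▸ hsep _ (by simp [EReal.coe_toReal hy (hnebot y)])
  have ha : 0 < a := by
    have := hmem y₀ hy₀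
    rw [hf] at hfu
    rw [hr₀, EReal.toReal_coe] at this
    linarith
  refine ⟨-a⁻¹ • g₀, u / a, fun y => ?_⟩
  rcases eq_or_ne (F y) ⊤ with hy | hy
  · simp [hy]
  rw [← EReal.coe_toReal hy (hnebot y), EReal.coe_le_coe_iff]
  calc (-a⁻¹ • g₀) y + u / a = (u - g₀ y) / a := by
        simp only [FunLike.coe_smul, Pi.smul_apply, smul_eq_mul]
        ring
    _ ≤ (F y).toReal := by
        rw [div_le_iff₀ ha]
        linarith [hmem y hy]

lemma exists_conjP_ne_top [NormedSpace ℝ E] (B : E →ₗ[ℝ] E →ₗ[ℝ] ℝ)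
    (hB : ∀ g : E →L[ℝ] ℝ, ∃ φ, ∀ y, B φ y = g y)
    (hproper : ∃ y, F y ≠ ⊤) (hnebot : ∀ y, F y ≠ ⊥)
    (hconv : ∀ (y z : E) (t : ℝ), 0 ≤ t → t ≤ 1 →
      F (t • y + (1 - t) • z) ≤ ((t : ℝ) : EReal) * F y + (((1 - t : ℝ)) : EReal) * F z)
    (hlsc : LowerSemicontinuous F) :
    ∃ φ, conjP (B · ·) F φ ≠ ⊤ := by
  obtain ⟨g, c, hgc⟩ := exists_affine_minorant hproper hnebot hconv hlsc
  obtain ⟨φ, hφ⟩ := hB g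
  refine ⟨φ, ne_top_of_le_ne_top (EReal.coe_ne_top (-c)) (iSup_le fun y => ?_)⟩
  have hy := hgc y
  change ((B φ y : ℝ) : EReal) - F y ≤ _
  rw [hφ]
  generalize F y = d at hy ⊢
  induction d using EReal.rec with
  | bot => simp at hy
  | top => simp
  | coe d =>
    rw [← EReal.coe_sub]
    norm_cast at hy ⊢
    linarith

end Minorant

lemma norm_smul_add_smul_sub_sq {E : Type*} [NormedAddCommGroup E] [InnerProductSpace ℝ E]
    (x y c : E) {t u : ℝ} (htu : t + u = 1) :
    ‖t • x + u • y - c‖ ^ 2 = t * ‖x - c‖ ^ 2 + u * ‖y - c‖ ^ 2 - t * u * ‖x - y‖ ^ 2 := by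
  obtain rfl : u = 1 - t := by linarith
  rw [show t • x + (1 - t) • y - c = t • (x - c) + (1 - t) • (y - c) by module,
    show x - y = (x - c) - (y - c) by abel, norm_add_sq_real, norm_sub_sq_real (x - c) (y - c),
    norm_smul, norm_smul, real_inner_smul_left, real_inner_smul_right, mul_pow, mul_pow,
    Real.norm_eq_abs, Real.norm_eq_abs, sq_abs, sq_abs]
  ring

lemma sum_norm_sub_sq_eq {ι E : Type*} [Fintype ι] [Nonempty ι] [NormedAddCommGroup E]
    [InnerProductSpace ℝ E] (v : E) (y : ι → E) :
    ∑ i, ‖v - y i‖ ^ 2 = Fintype.card ι * ‖v - (Fintype.card ι : ℝ)⁻¹ • ∑ i, y i‖ ^ 2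
      + ∑ i, ‖(Fintype.card ι : ℝ)⁻¹ • ∑ i, y i - y i‖ ^ 2 := by
  set c := (Fintype.card ι : ℝ)⁻¹ • ∑ i, y i
  have hc : ∑ i, (c - y i) = 0 := by
    rw [Finset.sum_sub_distrib, Finset.sum_const, Finset.card_univ, ← Nat.cast_smul_eq_nsmul ℝ,
      smul_inv_smul₀ (by positivity), sub_self]
  calc ∑ i, ‖v - y i‖ ^ 2 = ∑ i, (‖v - c‖ ^ 2 + 2 * ⟪v - c, c - y i⟫ + ‖c - y i‖ ^ 2) :=
        Finset.sum_congr rfl fun i _ => by rw [← norm_add_sq_real, sub_add_sub_cancel]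
    _ = _ := by
      rw [Finset.sum_add_distrib, Finset.sum_add_distrib, ← Finset.mul_sum, ← inner_sum, hc,
        inner_zero_right]
      simp

lemma StrictConvexOn.const_mul {E : Type*} [AddCommGroup E] [Module ℝ E] {s : Set E}
    {f : E → ℝ} (hf : StrictConvexOn ℝ s f) {c : ℝ} (hc : 0 < c) :
    StrictConvexOn ℝ s fun x => c * f x :=
  ⟨hf.1, fun x hx y hy hxy a b ha hb hab => by
    have := mul_lt_mul_of_pos_left (hf.2 hx hy hxy ha hb hab) hc
    simp only [smul_eq_mul] at this ⊢
    linarith⟩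

section Blocks

variable {ι : Type*} [Fintype ι] {Ys : ι → Type*} [∀ j, NormedAddCommGroup (Ys j)]
  [∀ j, InnerProductSpace ℝ (Ys j)] {κ : ι → Type*} [∀ j, Fintype (κ j)]

lemma strictConvexOn_sum_mul_norm_sub_sq {w : ι → ℝ} (hw : ∀ j, 0 < w j) (s : Π j, Ys j) :
    StrictConvexOn ℝ Set.univ fun v : Π j, Ys j => ∑ j, w j * ‖v j - s j‖ ^ 2 := by
  refine ⟨convex_univ, fun a _ b _ hab t u ht hu htu => ?_⟩
  obtain ⟨j, hj⟩ := Function.ne_iff.1 hab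
  have hpos : 0 < ∑ j, w j * ‖a j - b j‖ ^ 2 :=
    Finset.sum_pos' (fun j _ => mul_nonneg (hw j).le (sq_nonneg _)) ⟨j, Finset.mem_univ j,
      mul_pos (hw j) (pow_pos (norm_pos_iff.2 (sub_ne_zero.2 hj)) 2)⟩
  have key : ∀ k, w k * ‖(t • a + u • b) k - s k‖ ^ 2 = t * (w k * ‖a k - s k‖ ^ 2)
      + u * (w k * ‖b k - s k‖ ^ 2) - t * u * (w k * ‖a k - b k‖ ^ 2) := fun k => by
    rw [Pi.add_apply, Pi.smul_apply, Pi.smul_apply, norm_smul_add_smul_sub_sq _ _ _ htu]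
    ring
  simp only [key, Finset.sum_sub_distrib, Finset.sum_add_distrib, ← Finset.mul_sum, smul_eq_mul]
  linarith [mul_pos (mul_pos ht hu) hpos]

noncomputable def piInner : (Π j, Ys j) →ₗ[ℝ] (Π j, Ys j) →ₗ[ℝ] ℝ :=
  ∑ j, (innerₗ (Ys j)).compl₁₂ (LinearMap.proj j) (LinearMap.proj j)

noncomputable def blockInner : (Π j, κ j → Ys j) →ₗ[ℝ] (Π j, κ j → Ys j) →ₗ[ℝ] ℝ :=
  ∑ j, ∑ i, (innerₗ (Ys j)).compl₁₂ (LinearMap.proj i ∘ₗ LinearMap.proj j)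
    (LinearMap.proj i ∘ₗ LinearMap.proj j)

noncomputable def blockSum : (Π j, κ j → Ys j) →ₗ[ℝ] Π j, Ys j :=
  LinearMap.pi fun j => ∑ i, LinearMap.proj i ∘ₗ LinearMap.proj j

noncomputable def blockMean (u : Π j, κ j → Ys j) (j : ι) : Ys j :=
  (Fintype.card (κ j) : ℝ)⁻¹ • ∑ i, u j i

lemma piInner_apply (x y : Π j, Ys j) : piInner x y = ∑ j, ⟪x j, y j⟫ := by
  simp [piInner]

lemma blockInner_apply (u v : Π j, κ j → Ys j) : blockInner u v = ∑ j, ∑ i, ⟪u j i, v j i⟫ := by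
  simp [blockInner]

omit [Fintype ι] in
lemma blockSum_apply (u : Π j, κ j → Ys j) (j : ι) : blockSum u j = ∑ i, u j i := by
  simp [blockSum]

lemma exists_piInner_eq [∀ j, CompleteSpace (Ys j)] [DecidableEq ι] (g : (Π j, Ys j) →L[ℝ] ℝ) :
    ∃ φ, ∀ y, piInner φ y = g y := by
  refine ⟨fun j => (InnerProductSpace.toDual ℝ (Ys j)).symm
    (g.comp (ContinuousLinearMap.single ℝ Ys j)), fun y => ?_⟩
  simp only [piInner_apply, InnerProductSpace.toDual_symm_apply, ContinuousLinearMap.comp_apply,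
    ContinuousLinearMap.single_apply]
  rw [← map_sum, Finset.univ_sum_single]

lemma blockInner_replicate (v : Π j, Ys j) (u : Π j, κ j → Ys j) :
    blockInner (fun j _ => v j) u = piInner v (blockSum u) := by
  simp [blockInner_apply, piInner_apply, blockSum_apply, inner_sum]

omit [Fintype ι] in
lemma blockSum_surjective [∀ j, Nonempty (κ j)] :
    Function.Surjective (blockSum : (Π j, κ j → Ys j) →ₗ[ℝ] Π j, Ys j) := fun v => by
  refine ⟨fun j _ => (Fintype.card (κ j) : ℝ)⁻¹ • v j, funext fun j => ?_⟩
  rw [blockSum_apply, Finset.sum_const, Finset.card_univ, ← Nat.cast_smul_eq_nsmul ℝ,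
    smul_inv_smul₀ (by positivity)]

omit [Fintype ι] in
lemma blockSum_sub_blockMean [∀ j, Nonempty (κ j)] (u : Π j, κ j → Ys j) :
    blockSum (u - fun j _ => blockMean u j) = 0 := funext fun j => by
  rw [blockSum_apply, Pi.zero_apply]
  simp only [Pi.sub_apply, Finset.sum_sub_distrib, Finset.sum_const, Finset.card_univ, blockMean]
  rw [← Nat.cast_smul_eq_nsmul ℝ, smul_inv_smul₀ (by positivity), sub_self]

lemma blockInner_self_eq_zero {u : Π j, κ j → Ys j} : blockInner u u = 0 ↔ u = 0 := by
  simp only [blockInner_apply, real_inner_self_eq_norm_sq]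
  rw [Finset.sum_eq_zero_iff_of_nonneg fun j _ => Finset.sum_nonneg fun i _ => sq_nonneg _]
  simp [Finset.sum_eq_zero_iff_of_nonneg fun i _ => sq_nonneg _, funext_iff]

lemma sum_sum_inv_mul_norm_sub_sq [∀ j, Nonempty (κ j)] (σ : ι → ℝ) (y : Π j, κ j → Ys j)
    (v : Π j, Ys j) :
    ∑ j, ∑ i, ((Fintype.card (κ j) : ℝ) * σ j)⁻¹ * ‖v j - y j i‖ ^ 2
      = ∑ j, (σ j)⁻¹ * ‖v j - blockMean y j‖ ^ 2
        + ∑ j, ∑ i, ((Fintype.card (κ j) : ℝ) * σ j)⁻¹ * ‖blockMean y j - y j i‖ ^ 2 := by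
  rw [← Finset.sum_add_distrib]
  refine Finset.sum_congr rfl fun j _ => ?_
  rw [← Finset.mul_sum, ← Finset.mul_sum, sum_norm_sub_sq_eq, mul_add, mul_inv,
    mul_mul_mul_comm, inv_mul_cancel₀ (by positivity), one_mul]
  rfl

theorem eq_blockMean_of_conjP_ne_top [∀ j, Nonempty (κ j)] {F : (Π j, Ys j) → EReal}
    (hF : ∃ y, F y ≠ ⊤) {u : Π j, κ j → Ys j}
    (hu : conjP (blockInner · ·) (F ∘ blockSum) u ≠ ⊤) : u = fun j _ => blockMean u j := by
  set e := u - fun j _ => blockMean u j with he_def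
  have he : blockSum e = 0 := blockSum_sub_blockMean u
  have hue : blockInner u e = blockInner e e :=
    calc blockInner u e = blockInner (e + fun j _ => blockMean u j) e := by
          rw [he_def, sub_add_cancel]
      _ = blockInner e e := by
          rw [map_add, LinearMap.add_apply, blockInner_replicate, he, map_zero, add_zero]
  by_contra hne
  have hue_ne : blockInner u e ≠ 0 := by
    rw [hue]
    exact mt blockInner_self_eq_zero.1 (sub_ne_zero.2 hne)
  have htop := conjP_comp_eq_top_of_apply_eq_zero blockInner blockSum_surjective hF he hue_ne
  exact hu htop

end Blocks

/-- (Lemma 5 of the paper, prox form.) With `h̄ = h ∘ (D(m)S)`, `σ_j > 0` and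
`σ̃` the weight assigning `m_j σ_j` to every copy in `Y_j^{I(j)}`, the prox of `h̄*` in the
`σ̃⁻¹`-weighted norm at `𝒚` (characterized as the minimizer `𝒒`) is the consensus element
whose `j`-th block equals the `j`-th block of `prox_{σ,h*}(S𝒚)` (the minimizer `q`)
replicated over `I(j)`: `𝒒^{(j)}(i) = q^{(j)}` for all `j` and `i ∈ I(j)`. -/
theorem stmt8 {p : ℕ} (n : ℕ)
    (Ys : Fin p → Type)
    [∀ j, NormedAddCommGroup (Ys j)] [∀ j, InnerProductSpace ℝ (Ys j)]
    [∀ j, FiniteDimensional ℝ (Ys j)]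
    (I : Fin p → Finset (Fin n)) (hm : ∀ j, 1 ≤ (I j).card)
    (σ : Fin p → ℝ) (hσ : ∀ j, 0 < σ j)
    (h : (∀ j, Ys j) → EReal)
    -- h is proper:
    (hproper : ∃ y, h y ≠ ⊤) (hnebot : ∀ y, h y ≠ ⊥)
    -- h is convex:
    (hconv : ∀ (y z : ∀ j, Ys j) (t : ℝ), 0 ≤ t → t ≤ 1 →
      h (t • y + (1 - t) • z) ≤ ((t : ℝ) : EReal) * h y + (((1 - t : ℝ)) : EReal) * h z)
    -- h is closed (lower semicontinuous):
    (hlsc : LowerSemicontinuous h)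
    -- the pairings on Y and on 𝒀, and the function h̄ = h ∘ (D(m)S):
    (pairY : (∀ j, Ys j) → (∀ j, Ys j) → ℝ)
    (hpairY : ∀ y z, pairY y z = ∑ j, @inner ℝ _ _ (y j) (z j))
    (pairYY : (∀ j, {i // i ∈ I j} → Ys j) → (∀ j, {i // i ∈ I j} → Ys j) → ℝ)
    (hpairYY : ∀ u v, pairYY u v = ∑ j, ∑ i ∈ (I j).attach, @inner ℝ _ _ (u j i) (v j i))
    (hbar : (∀ j, {i // i ∈ I j} → Ys j) → EReal)
    (hhbar : ∀ yy, hbar yy = h (fun j =>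
      ((I j).card : ℝ) • (((I j).card : ℝ)⁻¹ • ∑ i ∈ (I j).attach, yy j i)))
    -- the point 𝒚 and its blockwise average S𝒚:
    (yy : ∀ j, {i // i ∈ I j} → Ys j) (Syy : ∀ j, Ys j)
    (hSyy : ∀ j, Syy j = ((I j).card : ℝ)⁻¹ • ∑ i ∈ (I j).attach, yy j i)
    -- 𝒒 = prox_{σ̃, h̄*}(𝒚):
    (qq : ∀ j, {i // i ∈ I j} → Ys j)
    (hqq : ∀ ww : ∀ j, {i // i ∈ I j} → Ys j,
      conjP pairYY hbar qq
          + (((1/2) * ∑ j, ∑ i ∈ (I j).attach,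
              (((I j).card : ℝ) * σ j)⁻¹ * ‖qq j i - yy j i‖^2 : ℝ) : EReal)
        ≤ conjP pairYY hbar ww
          + (((1/2) * ∑ j, ∑ i ∈ (I j).attach,
              (((I j).card : ℝ) * σ j)⁻¹ * ‖ww j i - yy j i‖^2 : ℝ) : EReal))
    -- q = prox_{σ, h*}(S𝒚):
    (q : ∀ j, Ys j)
    (hq : ∀ v : ∀ j, Ys j,
      conjP pairY h q + (((1/2) * ∑ j, (σ j)⁻¹ * ‖q j - Syy j‖^2 : ℝ) : EReal)
        ≤ conjP pairY h v + (((1/2) * ∑ j, (σ j)⁻¹ * ‖v j - Syy j‖^2 : ℝ) : EReal)) :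
    ∀ (j : Fin p) (i : {i // i ∈ I j}), qq j i = q j := by
  have : ∀ j, Nonempty {i // i ∈ I j} := fun j => (Finset.card_pos.1 (hm j)).to_subtype
  obtain rfl : pairY = (piInner · ·) := funext₂ fun x y => by rw [hpairY, piInner_apply]
  obtain rfl : pairYY = (blockInner · ·) := funext₂ fun u v => by
    rw [hpairYY, blockInner_apply]
    rfl
  obtain rfl : hbar = h ∘ blockSum := funext fun u => (hhbar u).trans <| congrArg h <|
    funext fun j => by
      rw [smul_inv_smul₀ (Nat.cast_pos.2 (hm j)).ne', blockSum_apply, Finset.univ_eq_attach]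
  obtain rfl : Syy = blockMean yy := funext fun j => by
    rw [hSyy, blockMean, Fintype.card_coe, Finset.univ_eq_attach]
  have hconj : ∀ v, conjP (blockInner · ·) (h ∘ blockSum) (fun j (_ : {i // i ∈ I j}) => v j)
      = conjP (piInner · ·) h v := fun v =>
    conjP_comp_of_surjective blockSum_surjective h (blockInner_replicate v)
  obtain ⟨K, hquad⟩ : ∃ K : ℝ, ∀ v : ∀ j, Ys j,
      (1/2) * ∑ j, ∑ i ∈ (I j).attach, (((I j).card : ℝ) * σ j)⁻¹ * ‖v j - yy j i‖^2
        = (1/2) * ∑ j, (σ j)⁻¹ * ‖v j - blockMean yy j‖^2 + K :=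
    ⟨_, fun v => by
      have := sum_sum_inv_mul_norm_sub_sq (κ := fun j => {i // i ∈ I j}) σ yy v
      simp only [Fintype.card_coe, Finset.univ_eq_attach] at this
      rw [this, mul_add]⟩
  obtain ⟨φ, hφ⟩ := exists_conjP_ne_top piInner exists_piInner_eq hproper hnebot hconv hlsc
  have hq_fin := EReal.ne_top_of_add_coe_le_add_coe (hq φ) hφ
  have hqq_fin := EReal.ne_top_of_add_coe_le_add_coe (hqq fun j _ => q j) (by rwa [hconj])
  obtain ⟨c, rfl⟩ : ∃ c : ∀ j, Ys j, qq = fun j _ => c j :=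
    ⟨_, eq_blockMean_of_conjP_ne_top hproper hqq_fin⟩
  have hc := fun v : (∀ j, Ys j) => hqq fun j _ => v j
  simp only [hconj, hquad, EReal.add_coe_add_le_add_coe_add_iff] at hc
  have hQ := (strictConvexOn_sum_mul_norm_sub_sq (fun j => inv_pos.2 (hσ j))
    (blockMean yy)).const_mul (by norm_num : (0 : ℝ) < 1 / 2)
  have hqc := eq_of_forall_conjP_add_le hproper hQ hq_fin hq hc
  intro j i
  exact (congrFun hqc j).symm
end

section
/- Under the conditions of the coordinate-descent primal-dual algorithm with m_j = 1 for all j, τ_i^{-1} > β_i, defining S_{k,*} = f(x_k) - f(x*) - ⟨∇f(x*), x_k - x*⟩ ≥ 0 and V, Ṽ as before, the iterates satisfy the supermartingale-type inequality E_k[S_{k+1,*} + V(z_{k+1} - z*)] ≤ (1 - 1/n)S_{k,*} + V(z_k - z*) - (1/n)Ṽ(z̄_{k+1} - z_k), where z_k = (x_k, y_k), z* = (x*, y*) is a saddle point, and z̄_{k+1} = (x̄_{k+1}, ȳ_{k+1}). -/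
open scoped RealInnerProductSpace

lemma inner_three {E : Type*} [NormedAddCommGroup E] [InnerProductSpace ℝ E]
    (a b c : E) : ⟪a - b, a - c⟫ = 1/2 * (‖a - b‖^2 + ‖a - c‖^2 - ‖b - c‖^2) := by
  have h1 : b - c = (a - c) - (a - b) := by abel
  rw [h1, norm_sub_sq_real (a-c) (a-b), real_inner_comm]; ring

lemma sum_sum_ite {N P : ℕ} (ι : Fin P → Fin N) (A B : Fin P → ℝ) :
    ∑ i : Fin N, ∑ j, (if ι j = i then A j else B j)
      = ∑ j, A j + ((N:ℝ) - 1) * ∑ j, B j := by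
  rw [Finset.sum_comm]
  have h : ∀ j : Fin P, ∑ i : Fin N, (if ι j = i then A j else B j)
      = A j + ((N:ℝ) - 1) * B j := by
    intro j
    have : ∀ i : Fin N, (if ι j = i then A j else B j)
        = B j + (if ι j = i then A j - B j else 0) := by
      intro i; split_ifs <;> ring
    simp only [this, Finset.sum_add_distrib, Finset.sum_const, Finset.card_univ,
      Fintype.card_fin, Finset.sum_ite_eq, Finset.mem_univ, if_true, nsmul_eq_mul]
    ring
  rw [Finset.sum_congr rfl (fun j _ => h j), Finset.sum_add_distrib, ← Finset.mul_sum]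

lemma sum_sum_ite_id {N : ℕ} (A B : Fin N → ℝ) :
    ∑ i : Fin N, ∑ l, (if l = i then A l else B l)
      = ∑ l, A l + ((N:ℝ) - 1) * ∑ l, B l :=
  sum_sum_ite (fun l => l) A B

lemma half_sum3 {N : ℕ} (a b c : Fin N → ℝ) :
    (1/2) * (∑ i, a i + ∑ i, b i - ∑ i, c i) = ∑ i, (1/2)*(a i + b i - c i) := by
  rw [← Finset.sum_add_distrib, ← Finset.sum_sub_distrib, Finset.mul_sum]

lemma sum_comb4 {P : ℕ} (c1 c2 c3 c4 : ℝ) (e1 e2 e3 e4 : Fin P → ℝ) :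
    ∑ j, (c1 * e1 j + c2 * e2 j + c3 * e3 j + c4 * e4 j)
      = c1 * ∑ j, e1 j + c2 * ∑ j, e2 j + c3 * ∑ j, e3 j + c4 * ∑ j, e4 j := by
  simp [Finset.sum_add_distrib, Finset.mul_sum]

lemma strong_prox {n : ℕ} {Xs : Fin n → Type}
    [∀ i, NormedAddCommGroup (Xs i)] [∀ i, InnerProductSpace ℝ (Xs i)]
    (w : Fin n → ℝ) (hw : ∀ i, 0 ≤ w i)
    (φ : (∀ i, Xs i) → ℝ) (hφ : ConvexOn ℝ Set.univ φ)
    (c m : ∀ i, Xs i)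
    (hm : ∀ u, φ m + (1/2) * ∑ i, w i * ‖m i - c i‖^2
        ≤ φ u + (1/2) * ∑ i, w i * ‖u i - c i‖^2)
    (u : ∀ i, Xs i) :
    φ m + ∑ i, w i * ⟪c i - m i, u i - m i⟫ ≤ φ u := by
  set C : ℝ := ∑ i, w i * ‖u i - m i‖^2 with hC
  have hC0 : 0 ≤ C := Finset.sum_nonneg fun i _ =>
    mul_nonneg (hw i) (by positivity)
  have key : ∀ t : ℝ, 0 < t → t ≤ 1 →
      φ m + ∑ i, w i * ⟪c i - m i, u i - m i⟫ ≤ φ u + (t/2) * C := by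
    intro t ht ht1
    have h1 := hm (fun i => m i + t • (u i - m i))
    have heq : (fun i => m i + t • (u i - m i)) = (1 - t) • m + t • u := by
      funext i
      show m i + t • (u i - m i) = (1 - t) • m i + t • u i
      rw [smul_sub, sub_smul, one_smul]; abel
    have hconv := hφ.2 (Set.mem_univ m) (Set.mem_univ u)
      (by linarith : (0:ℝ) ≤ 1 - t) (le_of_lt ht) (by ring)
    rw [← heq] at hconv
    have hquad : ∀ i, ‖(m i + t • (u i - m i)) - c i‖^2
        = ‖m i - c i‖^2 + 2 * t * ⟪m i - c i, u i - m i⟫ + t^2 * ‖u i - m i‖^2 := by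
      intro i
      have : (m i + t • (u i - m i)) - c i = (m i - c i) + t • (u i - m i) := by abel
      rw [this, norm_add_sq_real, real_inner_smul_right, norm_smul, Real.norm_eq_abs,
        abs_of_pos ht, mul_pow]
      ring
    have hsum : ∑ i, w i * ‖(m i + t • (u i - m i)) - c i‖^2
        = ∑ i, w i * ‖m i - c i‖^2
          + 2 * t * ∑ i, w i * ⟪m i - c i, u i - m i⟫ + t^2 * C := by
      have hper : ∀ i : Fin n, w i * ‖(m i + t • (u i - m i)) - c i‖^2
          = w i * ‖m i - c i‖^2 + 2 * t * (w i * ⟪m i - c i, u i - m i⟫)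
            + t^2 * (w i * ‖u i - m i‖^2) := by
        intro i; rw [hquad i]; ring
      rw [Finset.sum_congr rfl (fun i _ => hper i), Finset.sum_add_distrib,
        Finset.sum_add_distrib, ← Finset.mul_sum, ← Finset.mul_sum, hC]
    have hsum2 : ∑ i, w i * ⟪c i - m i, u i - m i⟫
        = -∑ i, w i * ⟪m i - c i, u i - m i⟫ := by
      rw [← Finset.sum_neg_distrib]
      apply Finset.sum_congr rfl
      intro i _
      have : c i - m i = -(m i - c i) := by abel
      rw [this, inner_neg_left]; ring
    simp only [smul_eq_mul] at hconv
    rw [hsum] at h1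
    rw [hsum2]
    by_contra hcon
    push_neg at hcon
    nlinarith [h1, hconv, mul_pos ht (by linarith :
      (0:ℝ) < φ m + -∑ i, w i * ⟪m i - c i, u i - m i⟫ - (φ u + t/2*C))]
  have hfin : ∀ ε > 0, φ m + ∑ i, w i * ⟪c i - m i, u i - m i⟫ ≤ φ u + ε := by
    intro ε hε
    have ht : 0 < min 1 (ε / (C + 1)) := lt_min one_pos (by positivity)
    have h := key _ ht (min_le_left _ _)
    have h2 : (min 1 (ε / (C + 1)) / 2) * C ≤ ε := by
      have h3 : min 1 (ε / (C + 1)) ≤ ε / (C + 1) := min_le_right _ _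
      have h4 : (ε / (C + 1)) * C ≤ ε := by
        rw [div_mul_eq_mul_div, div_le_iff₀ (by linarith)]
        nlinarith
      nlinarith [ht.le]
    linarith
  exact le_of_forall_pos_le_add hfin
/-- `Ṽ(a,b) = (1/2)‖a‖²_{τ⁻¹-β} + ⟨b, Ma⟩ + (1/2)‖b‖²_{σ⁻¹}`. -/
noncomputable def Vtilde {n p : ℕ} (Xs : Fin n → Type) (Ys : Fin p → Type)
    [∀ i, NormedAddCommGroup (Xs i)] [∀ i, InnerProductSpace ℝ (Xs i)]
    [∀ j, NormedAddCommGroup (Ys j)] [∀ j, InnerProductSpace ℝ (Ys j)]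
    (Mb : ∀ j i, Xs i →L[ℝ] Ys j) (τ β : Fin n → ℝ) (σ : Fin p → ℝ)
    (a : ∀ i, Xs i) (b : ∀ j, Ys j) : ℝ :=
  (1/2) * ∑ i, ((τ i)⁻¹ - β i) * ‖a i‖^2
    + ∑ j, ⟪b j, (∑ i, Mb j i (a i))⟫
    + (1/2) * ∑ j, (σ j)⁻¹ * ‖b j‖^2

set_option maxHeartbeats 2000000 in
/-- (Lemma 3 of the paper.) For the coordinate-descent primal-dual algorithm
with `m_j = 1` for all `j` (unique nonzero column `ι j` in each row block), `τ_i⁻¹ > β_i`,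
and `S_{k,*}(x) = f(x) - f(x*) - ⟨∇f(x*), x - x*⟩ ≥ 0`, the iterates satisfy
`E_k[S_{k+1,*} + V(z_{k+1}-z*)] ≤ (1-1/n) S_{k,*} + V(z_k-z*) - (1/n) Ṽ(z̄_{k+1}-z_k)`,
the conditional expectation `E_k` being the average over the uniform choice of `i_{k+1}`. -/
theorem stmt11 {n p : ℕ} (hn : 0 < n)
    (Xs : Fin n → Type) (Ys : Fin p → Type)
    [∀ i, NormedAddCommGroup (Xs i)] [∀ i, InnerProductSpace ℝ (Xs i)]
    [∀ i, FiniteDimensional ℝ (Xs i)]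
    [∀ j, NormedAddCommGroup (Ys j)] [∀ j, InnerProductSpace ℝ (Ys j)]
    [∀ j, FiniteDimensional ℝ (Ys j)]
    (Mb : ∀ j i, Xs i →L[ℝ] Ys j)
    (ι : Fin p → Fin n) (hι : ∀ j i, Mb j i ≠ 0 ↔ i = ι j)
    (τ β : Fin n → ℝ) (σ : Fin p → ℝ)
    (hτ : ∀ i, 0 < τ i) (hβ : ∀ i, 0 ≤ β i) (hσ : ∀ j, 0 < σ j)
    (hτβ : ∀ i, β i < (τ i)⁻¹)
    -- f convex differentiable with gradient gradf:
    (f : (∀ i, Xs i) → ℝ) (gradf : (∀ i, Xs i) → ∀ i, Xs i)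
    (hf : ∀ x u, f x + ∑ i, ⟪gradf x i, u i - x i⟫ ≤ f u)
    -- coordinate-wise smoothness of f:
    (hsmooth : ∀ (x : ∀ i, Xs i) (i : Fin n) (u : Xs i),
      f (Function.update x i (x i + u)) ≤ f x + ⟪gradf x i, u⟫ + β i / 2 * ‖u‖^2)
    -- g and h* convex:
    (g : (∀ i, Xs i) → ℝ) (hstar : (∀ j, Ys j) → ℝ)
    (hg : ConvexOn ℝ Set.univ g) (hh : ConvexOn ℝ Set.univ hstar)
    -- the saddle point (x*, y*):
    (xs : ∀ i, Xs i) (ys : ∀ j, Ys j)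
    (hsad1 : ∀ u, g xs + ∑ i, ⟪-(gradf xs i)
        - ∑ j, ContinuousLinearMap.adjoint (Mb j i) (ys j), u i - xs i⟫ ≤ g u)
    (hsad2 : ∀ v, hstar ys + ∑ j, ⟪(∑ i, Mb j i (xs i)), v j - ys j⟫ ≤ hstar v)
    -- the current iterate (x_k, y_k) and the full prox updates ȳ_{k+1}, x̄_{k+1}:
    (xk : ∀ i, Xs i) (yk : ∀ j, Ys j) (ybar : ∀ j, Ys j) (xbar : ∀ i, Xs i)
    (hybar : ∀ v, hstar ybar
        + (1/2) * ∑ j, (σ j)⁻¹ * ‖ybar j - (yk j + σ j • ∑ i, Mb j i (xk i))‖^2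
      ≤ hstar v + (1/2) * ∑ j, (σ j)⁻¹ * ‖v j - (yk j + σ j • ∑ i, Mb j i (xk i))‖^2)
    (hxbar : ∀ u, g xbar
        + (1/2) * ∑ i, (τ i)⁻¹ * ‖xbar i - (xk i - τ i • (gradf xk i
            + ∑ j, ContinuousLinearMap.adjoint (Mb j i) ((2:ℝ) • ybar j - yk j)))‖^2
      ≤ g u + (1/2) * ∑ i, (τ i)⁻¹ * ‖u i - (xk i - τ i • (gradf xk i
            + ∑ j, ContinuousLinearMap.adjoint (Mb j i) ((2:ℝ) • ybar j - yk j)))‖^2)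
    -- the coordinate updates as functions of the selected coordinate i_{k+1} = i:
    (xnext : Fin n → ∀ i, Xs i) (ynext : Fin n → ∀ j, Ys j)
    (hxnext : ∀ i l, xnext i l = if l = i then xbar l else xk l)
    (hynext : ∀ i j, ynext i j = if ι j = i then ybar j else yk j) :
    (1 / (n:ℝ)) * ∑ i : Fin n,
        ((f (xnext i) - f xs - ∑ l, ⟪gradf xs l, xnext i l - xs l⟫)
          + Vform Xs Ys Mb τ σ (fun l => xnext i l - xs l) (fun j => ynext i j - ys j))
      ≤ (1 - 1 / (n:ℝ)) * (f xk - f xs - ∑ l, ⟪gradf xs l, xk l - xs l⟫)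
        + Vform Xs Ys Mb τ σ (fun l => xk l - xs l) (fun j => yk j - ys j)
        - (1 / (n:ℝ)) * Vtilde Xs Ys Mb τ β σ
            (fun l => xbar l - xk l) (fun j => ybar j - yk j) := by
  -- basics
  have hn' : (0:ℝ) < (n:ℝ) := by exact_mod_cast hn
  have hτne : ∀ i, (τ i) ≠ 0 := fun i => (hτ i).ne'
  have hM0 : ∀ j l, l ≠ ι j → Mb j l = 0 := by
    intro j l h
    by_contra hne
    exact h ((hι j l).mp hne)
  have hMsum : ∀ (j : Fin p) (v : ∀ i, Xs i),
      ∑ i, Mb j i (v i) = Mb j (ι j) (v (ι j)) := by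
    intro j v
    refine Finset.sum_eq_single (ι j) (fun l _ hl => ?_)
      (fun h => absurd (Finset.mem_univ _) h)
    rw [hM0 j l hl]; rfl
  have PG := strong_prox (fun i => (τ i)⁻¹) (fun i => inv_nonneg.mpr (hτ i).le) g hg
      (fun i => xk i - τ i • (gradf xk i
        + ∑ j, ContinuousLinearMap.adjoint (Mb j i) ((2:ℝ) • ybar j - yk j)))
      xbar hxbar xs
  have PH := strong_prox (fun j => (σ j)⁻¹) (fun j => inv_nonneg.mpr (hσ j).le) hstar hh
      (fun j => yk j + σ j • ∑ i, Mb j i (xk i)) ybar hybar ys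
  have hAdjSum : ∀ (w : ∀ j, Ys j) (v : ∀ i, Xs i),
      ∑ i, ∑ j, ⟪w j, Mb j i (v i)⟫ = ∑ j, ⟪w j, Mb j (ι j) (v (ι j))⟫ := by
    intro w v
    rw [Finset.sum_comm]
    exact Finset.sum_congr rfl fun j _ => by rw [← inner_sum, hMsum]
  -- K1 : smoothness bound on the expectation of f
  have K1 : ∑ i, f (xnext i)
      ≤ (n:ℝ) * f xk + ∑ i, ⟪gradf xk i, xbar i - xk i⟫
        + (1/2) * ∑ i, β i * ‖xbar i - xk i‖^2 := by
    have hper : ∀ i : Fin n, f (xnext i)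
        ≤ f xk + ⟪gradf xk i, xbar i - xk i⟫ + β i / 2 * ‖xbar i - xk i‖^2 := by
      intro i
      have h := hsmooth xk i (xbar i - xk i)
      have hup : Function.update xk i (xk i + (xbar i - xk i)) = xnext i := by
        funext l
        rcases eq_or_ne l i with rfl | hli
        · rw [Function.update_self, hxnext]; simp
        · rw [Function.update_of_ne hli, hxnext]; simp [hli]
      rwa [hup] at h
    calc ∑ i, f (xnext i)
        ≤ ∑ i, (f xk + ⟪gradf xk i, xbar i - xk i⟫ + β i / 2 * ‖xbar i - xk i‖^2) :=
          Finset.sum_le_sum (fun i _ => hper i)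
      _ = (n:ℝ) * f xk + ∑ i, ⟪gradf xk i, xbar i - xk i⟫
          + (1/2) * ∑ i, β i * ‖xbar i - xk i‖^2 := by
          rw [Finset.sum_add_distrib, Finset.sum_add_distrib, Finset.sum_const,
            Finset.card_univ, Fintype.card_fin, nsmul_eq_mul,
            show (∑ i, β i / 2 * ‖xbar i - xk i‖^2)
              = (1/2) * ∑ i, β i * ‖xbar i - xk i‖^2 from by
                rw [Finset.mul_sum]; exact Finset.sum_congr rfl fun i _ => by ring]
  have K2 := hf xk xs
  -- scalarize PG
  have hPG1 : ∑ i, (τ i)⁻¹ * ⟪(xk i - τ i • (gradf xk i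
        + ∑ j, ContinuousLinearMap.adjoint (Mb j i) ((2:ℝ) • ybar j - yk j))) - xbar i,
        xs i - xbar i⟫
      = ∑ i, (τ i)⁻¹ * ⟪xk i - xbar i, xs i - xbar i⟫
        - ∑ i, ⟪gradf xk i + ∑ j, ContinuousLinearMap.adjoint (Mb j i)
            ((2:ℝ) • ybar j - yk j), xs i - xbar i⟫ := by
    rw [← Finset.sum_sub_distrib]
    refine Finset.sum_congr rfl fun i _ => ?_
    rw [show (xk i - τ i • (gradf xk i + ∑ j, ContinuousLinearMap.adjoint (Mb j i)
          ((2:ℝ) • ybar j - yk j))) - xbar i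
        = (xk i - xbar i) - τ i • (gradf xk i + ∑ j, ContinuousLinearMap.adjoint (Mb j i)
          ((2:ℝ) • ybar j - yk j)) from by abel,
      inner_sub_left, real_inner_smul_left, mul_sub, ← mul_assoc,
      inv_mul_cancel₀ (hτne i), one_mul]
  have hPG2 : ∑ i, (τ i)⁻¹ * ⟪xk i - xbar i, xs i - xbar i⟫
      = (1/2) * (∑ i, (τ i)⁻¹ * ‖xbar i - xk i‖^2 + ∑ l, (τ l)⁻¹ * ‖xbar l - xs l‖^2
          - ∑ l, (τ l)⁻¹ * ‖xk l - xs l‖^2) := by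
    rw [half_sum3]
    refine Finset.sum_congr rfl fun i _ => ?_
    rw [show xk i - xbar i = -(xbar i - xk i) from by abel,
      show xs i - xbar i = -(xbar i - xs i) from by abel, inner_neg_neg,
      inner_three (xbar i) (xk i) (xs i)]
    ring
  have hPG3 : ∑ i, ⟪gradf xk i + ∑ j, ContinuousLinearMap.adjoint (Mb j i)
        ((2:ℝ) • ybar j - yk j), xs i - xbar i⟫
      = (∑ i, ⟪gradf xk i, xs i - xk i⟫ - ∑ i, ⟪gradf xk i, xbar i - xk i⟫)
        + ∑ j, ⟪(2:ℝ) • ybar j - yk j, Mb j (ι j) (xs (ι j) - xbar (ι j))⟫ := by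
    have h1 : ∀ i : Fin n, ⟪gradf xk i + ∑ j, ContinuousLinearMap.adjoint (Mb j i)
          ((2:ℝ) • ybar j - yk j), xs i - xbar i⟫
        = (⟪gradf xk i, xs i - xk i⟫ - ⟪gradf xk i, xbar i - xk i⟫)
          + ∑ j, ⟪(2:ℝ) • ybar j - yk j, Mb j i (xs i - xbar i)⟫ := by
      intro i
      rw [inner_add_left, sum_inner]
      congr 1
      · rw [show xs i - xbar i = (xs i - xk i) - (xbar i - xk i) from by abel,
          inner_sub_right]
      · exact Finset.sum_congr rfl fun j _ =>
          ContinuousLinearMap.adjoint_inner_left _ _ _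
    rw [Finset.sum_congr rfl fun i _ => h1 i, Finset.sum_add_distrib,
      Finset.sum_sub_distrib, hAdjSum]
  have hPGc : ∑ j, ⟪(2:ℝ) • ybar j - yk j, Mb j (ι j) (xs (ι j) - xbar (ι j))⟫
      = 2 * ∑ j, ⟪ybar j, Mb j (ι j) (xs (ι j))⟫
        - 2 * ∑ j, ⟪ybar j, Mb j (ι j) (xbar (ι j))⟫
        - ∑ j, ⟪yk j, Mb j (ι j) (xs (ι j))⟫
        + ∑ j, ⟪yk j, Mb j (ι j) (xbar (ι j))⟫ := by
    rw [Finset.sum_congr rfl (fun j _ => show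
        ⟪(2:ℝ) • ybar j - yk j, Mb j (ι j) (xs (ι j) - xbar (ι j))⟫
        = 2 * ⟪ybar j, Mb j (ι j) (xs (ι j))⟫
          + (-2) * ⟪ybar j, Mb j (ι j) (xbar (ι j))⟫
          + (-1) * ⟪yk j, Mb j (ι j) (xs (ι j))⟫
          + 1 * ⟪yk j, Mb j (ι j) (xbar (ι j))⟫ from by
        rw [map_sub, inner_sub_left, inner_sub_right, inner_sub_right,
          real_inner_smul_left, real_inner_smul_left]
        ring), sum_comb4]
    ring
  -- scalarize hsad1 at xbar
  have hsad1c : ∑ i, ⟪-gradf xs i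
        - ∑ j, ContinuousLinearMap.adjoint (Mb j i) (ys j), xbar i - xs i⟫
      = -∑ l, ⟪gradf xs l, xbar l - xs l⟫
        - (∑ j, ⟪ys j, Mb j (ι j) (xbar (ι j))⟫
            - ∑ j, ⟪ys j, Mb j (ι j) (xs (ι j))⟫) := by
    have h1 : ∀ i : Fin n, ⟪-gradf xs i
          - ∑ j, ContinuousLinearMap.adjoint (Mb j i) (ys j), xbar i - xs i⟫
        = -⟪gradf xs i, xbar i - xs i⟫ - ∑ j, ⟪ys j, Mb j i (xbar i - xs i)⟫ := by
      intro i
      rw [inner_sub_left, inner_neg_left, sum_inner]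
      congr 1
      exact Finset.sum_congr rfl fun j _ =>
        ContinuousLinearMap.adjoint_inner_left _ _ _
    rw [Finset.sum_congr rfl fun i _ => h1 i, Finset.sum_sub_distrib,
      ← Finset.sum_neg_distrib, hAdjSum]
    congr 1
    rw [← Finset.sum_sub_distrib]
    exact Finset.sum_congr rfl fun j _ => by rw [map_sub, inner_sub_right]
  -- scalarize PH
  have hPH1 : ∑ j, (σ j)⁻¹ * ⟪(yk j + σ j • ∑ i, Mb j i (xk i)) - ybar j, ys j - ybar j⟫
      = ∑ j, (σ j)⁻¹ * ⟪yk j - ybar j, ys j - ybar j⟫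
        + ∑ j, ⟪Mb j (ι j) (xk (ι j)), ys j - ybar j⟫ := by
    rw [← Finset.sum_add_distrib]
    refine Finset.sum_congr rfl fun j _ => ?_
    rw [show (yk j + σ j • ∑ i, Mb j i (xk i)) - ybar j
        = (yk j - ybar j) + σ j • ∑ i, Mb j i (xk i) from by abel,
      inner_add_left, real_inner_smul_left, mul_add, ← mul_assoc,
      inv_mul_cancel₀ (hσ j).ne', one_mul, hMsum]
  have hPH2 : ∑ j, (σ j)⁻¹ * ⟪yk j - ybar j, ys j - ybar j⟫
      = (1/2) * (∑ j, (σ j)⁻¹ * ‖ybar j - yk j‖^2 + ∑ j, (σ j)⁻¹ * ‖ybar j - ys j‖^2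
          - ∑ j, (σ j)⁻¹ * ‖yk j - ys j‖^2) := by
    rw [half_sum3]
    refine Finset.sum_congr rfl fun j _ => ?_
    rw [show yk j - ybar j = -(ybar j - yk j) from by abel,
      show ys j - ybar j = -(ybar j - ys j) from by abel, inner_neg_neg,
      inner_three (ybar j) (yk j) (ys j)]
    ring
  have hPH3 : ∑ j, ⟪Mb j (ι j) (xk (ι j)), ys j - ybar j⟫
      = ∑ j, ⟪ys j, Mb j (ι j) (xk (ι j))⟫ - ∑ j, ⟪ybar j, Mb j (ι j) (xk (ι j))⟫ := by
    rw [← Finset.sum_sub_distrib]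
    exact Finset.sum_congr rfl fun j _ => by
      rw [real_inner_comm, inner_sub_left]
  -- scalarize hsad2 at ybar
  have hsad2c : ∑ j, ⟪∑ i, Mb j i (xs i), ybar j - ys j⟫
      = ∑ j, ⟪ybar j, Mb j (ι j) (xs (ι j))⟫ - ∑ j, ⟪ys j, Mb j (ι j) (xs (ι j))⟫ := by
    rw [← Finset.sum_sub_distrib]
    exact Finset.sum_congr rfl fun j _ => by
      rw [hMsum, real_inner_comm, inner_sub_left]
  -- coupling expansions
  have hKA : ∑ j, ⟪ybar j - ys j, Mb j (ι j) (xbar (ι j) - xs (ι j))⟫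
      = ∑ j, ⟪ybar j, Mb j (ι j) (xbar (ι j))⟫ - ∑ j, ⟪ybar j, Mb j (ι j) (xs (ι j))⟫
        - ∑ j, ⟪ys j, Mb j (ι j) (xbar (ι j))⟫ + ∑ j, ⟪ys j, Mb j (ι j) (xs (ι j))⟫ := by
    rw [Finset.sum_congr rfl (fun j _ => show
        ⟪ybar j - ys j, Mb j (ι j) (xbar (ι j) - xs (ι j))⟫
        = 1 * ⟪ybar j, Mb j (ι j) (xbar (ι j))⟫ + (-1) * ⟪ybar j, Mb j (ι j) (xs (ι j))⟫
          + (-1) * ⟪ys j, Mb j (ι j) (xbar (ι j))⟫ + 1 * ⟪ys j, Mb j (ι j) (xs (ι j))⟫ from by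
        rw [map_sub, inner_sub_left, inner_sub_right, inner_sub_right]; ring), sum_comb4]
    ring
  have hKB : ∑ j, ⟪yk j - ys j, Mb j (ι j) (xk (ι j) - xs (ι j))⟫
      = ∑ j, ⟪yk j, Mb j (ι j) (xk (ι j))⟫ - ∑ j, ⟪yk j, Mb j (ι j) (xs (ι j))⟫
        - ∑ j, ⟪ys j, Mb j (ι j) (xk (ι j))⟫ + ∑ j, ⟪ys j, Mb j (ι j) (xs (ι j))⟫ := by
    rw [Finset.sum_congr rfl (fun j _ => show
        ⟪yk j - ys j, Mb j (ι j) (xk (ι j) - xs (ι j))⟫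
        = 1 * ⟪yk j, Mb j (ι j) (xk (ι j))⟫ + (-1) * ⟪yk j, Mb j (ι j) (xs (ι j))⟫
          + (-1) * ⟪ys j, Mb j (ι j) (xk (ι j))⟫ + 1 * ⟪ys j, Mb j (ι j) (xs (ι j))⟫ from by
        rw [map_sub, inner_sub_left, inner_sub_right, inner_sub_right]; ring), sum_comb4]
    ring
  have hKbk : ∑ j, ⟪ybar j - yk j, Mb j (ι j) (xbar (ι j) - xk (ι j))⟫
      = ∑ j, ⟪ybar j, Mb j (ι j) (xbar (ι j))⟫ - ∑ j, ⟪ybar j, Mb j (ι j) (xk (ι j))⟫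
        - ∑ j, ⟪yk j, Mb j (ι j) (xbar (ι j))⟫ + ∑ j, ⟪yk j, Mb j (ι j) (xk (ι j))⟫ := by
    rw [Finset.sum_congr rfl (fun j _ => show
        ⟪ybar j - yk j, Mb j (ι j) (xbar (ι j) - xk (ι j))⟫
        = 1 * ⟪ybar j, Mb j (ι j) (xbar (ι j))⟫ + (-1) * ⟪ybar j, Mb j (ι j) (xk (ι j))⟫
          + (-1) * ⟪yk j, Mb j (ι j) (xbar (ι j))⟫ + 1 * ⟪yk j, Mb j (ι j) (xk (ι j))⟫ from by
        rw [map_sub, inner_sub_left, inner_sub_right, inner_sub_right]; ring), sum_comb4]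
    ring
  -- combine PG + hsad1
  have K3 : (1/2) * (∑ i, (τ i)⁻¹ * ‖xbar i - xk i‖^2 + ∑ l, (τ l)⁻¹ * ‖xbar l - xs l‖^2
          - ∑ l, (τ l)⁻¹ * ‖xk l - xs l‖^2)
        - (∑ i, ⟪gradf xk i, xs i - xk i⟫ - ∑ i, ⟪gradf xk i, xbar i - xk i⟫)
        - (2 * ∑ j, ⟪ybar j, Mb j (ι j) (xs (ι j))⟫
            - 2 * ∑ j, ⟪ybar j, Mb j (ι j) (xbar (ι j))⟫
            - ∑ j, ⟪yk j, Mb j (ι j) (xs (ι j))⟫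
            + ∑ j, ⟪yk j, Mb j (ι j) (xbar (ι j))⟫)
        - ∑ l, ⟪gradf xs l, xbar l - xs l⟫
        - (∑ j, ⟪ys j, Mb j (ι j) (xbar (ι j))⟫ - ∑ j, ⟪ys j, Mb j (ι j) (xs (ι j))⟫)
      ≤ 0 := by
    have h1 := PG
    rw [hPG1, hPG2, hPG3, hPGc] at h1
    have h2 := hsad1 xbar
    rw [hsad1c] at h2
    linarith
  -- combine PH + hsad2
  have K4 : (1/2) * (∑ j, (σ j)⁻¹ * ‖ybar j - yk j‖^2 + ∑ j, (σ j)⁻¹ * ‖ybar j - ys j‖^2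
          - ∑ j, (σ j)⁻¹ * ‖yk j - ys j‖^2)
        + (∑ j, ⟪ys j, Mb j (ι j) (xk (ι j))⟫ - ∑ j, ⟪ybar j, Mb j (ι j) (xk (ι j))⟫)
        + (∑ j, ⟪ybar j, Mb j (ι j) (xs (ι j))⟫ - ∑ j, ⟪ys j, Mb j (ι j) (xs (ι j))⟫)
      ≤ 0 := by
    have h1 := PH
    rw [hPH1, hPH2, hPH3] at h1
    have h2 := hsad2 ybar
    rw [hsad2c] at h2
    linarith
  -- the core pointwise inequality
  have hstarS : ∑ i, f (xnext i)
      ≤ ((n:ℝ) - 1) * f xk + f xs + ∑ l, ⟪gradf xs l, xbar l - xs l⟫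
        - ((1/2) * ∑ l, (τ l)⁻¹ * ‖xbar l - xs l‖^2
            + ∑ j, ⟪ybar j - ys j, Mb j (ι j) (xbar (ι j) - xs (ι j))⟫
            + (1/2) * ∑ j, (σ j)⁻¹ * ‖ybar j - ys j‖^2)
        + ((1/2) * ∑ l, (τ l)⁻¹ * ‖xk l - xs l‖^2
            + ∑ j, ⟪yk j - ys j, Mb j (ι j) (xk (ι j) - xs (ι j))⟫
            + (1/2) * ∑ j, (σ j)⁻¹ * ‖yk j - ys j‖^2)
        - ((1/2) * (∑ i, (τ i)⁻¹ * ‖xbar i - xk i‖^2 - ∑ i, β i * ‖xbar i - xk i‖^2)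
            + ∑ j, ⟪ybar j - yk j, Mb j (ι j) (xbar (ι j) - xk (ι j))⟫
            + (1/2) * ∑ j, (σ j)⁻¹ * ‖ybar j - yk j‖^2) := by
    linarith [K1, K2, K3, K4, hKA, hKB, hKbk]
  -- V(z_k - z*) in scalar form
  have hVk : Vform Xs Ys Mb τ σ (fun l => xk l - xs l) (fun j => yk j - ys j)
      = (1/2) * ∑ l, (τ l)⁻¹ * ‖xk l - xs l‖^2
        + ∑ j, ⟪yk j - ys j, Mb j (ι j) (xk (ι j) - xs (ι j))⟫
        + (1/2) * ∑ j, (σ j)⁻¹ * ‖yk j - ys j‖^2 := by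
    simp only [Vform]
    congr 2
    exact Finset.sum_congr rfl fun j _ => by rw [hMsum j (fun l => xk l - xs l)]
  -- Ṽ(z̄_{k+1} - z_k) in scalar form
  have hVt : Vtilde Xs Ys Mb τ β σ (fun l => xbar l - xk l) (fun j => ybar j - yk j)
      = (1/2) * (∑ i, (τ i)⁻¹ * ‖xbar i - xk i‖^2 - ∑ i, β i * ‖xbar i - xk i‖^2)
        + ∑ j, ⟪ybar j - yk j, Mb j (ι j) (xbar (ι j) - xk (ι j))⟫
        + (1/2) * ∑ j, (σ j)⁻¹ * ‖ybar j - yk j‖^2 := by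
    simp only [Vtilde]
    rw [show (∑ i, ((τ i)⁻¹ - β i) * ‖xbar i - xk i‖^2)
        = ∑ i, (τ i)⁻¹ * ‖xbar i - xk i‖^2 - ∑ i, β i * ‖xbar i - xk i‖^2 from by
      rw [← Finset.sum_sub_distrib]
      exact Finset.sum_congr rfl fun i _ => sub_mul _ _ _]
    congr 2
    exact Finset.sum_congr rfl fun j _ => by rw [hMsum j (fun l => xbar l - xk l)]
  -- pointwise decomposition of the expectation summand
  have e1 : ∀ i : Fin n, (∑ l, ⟪gradf xs l, xnext i l - xs l⟫)
      = ∑ l, (if l = i then ⟪gradf xs l, xbar l - xs l⟫ else ⟪gradf xs l, xk l - xs l⟫) := by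
    intro i
    refine Finset.sum_congr rfl fun l _ => ?_
    rw [hxnext i l]; by_cases h : l = i <;> simp [h]
  have e2 : ∀ i : Fin n, (∑ l, (τ l)⁻¹ * ‖xnext i l - xs l‖^2)
      = ∑ l, (if l = i then (τ l)⁻¹ * ‖xbar l - xs l‖^2 else (τ l)⁻¹ * ‖xk l - xs l‖^2) := by
    intro i
    refine Finset.sum_congr rfl fun l _ => ?_
    rw [hxnext i l]; by_cases h : l = i <;> simp [h]
  have e3 : ∀ i : Fin n, (∑ j, ⟪ynext i j - ys j, ∑ l, Mb j l (xnext i l - xs l)⟫)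
      = ∑ j, (if ι j = i then ⟪ybar j - ys j, Mb j (ι j) (xbar (ι j) - xs (ι j))⟫
          else ⟪yk j - ys j, Mb j (ι j) (xk (ι j) - xs (ι j))⟫) := by
    intro i
    refine Finset.sum_congr rfl fun j _ => ?_
    rw [hMsum j (fun l => xnext i l - xs l), hynext i j, hxnext i (ι j)]
    by_cases h : ι j = i <;> simp [h]
  have e4 : ∀ i : Fin n, (∑ j, (σ j)⁻¹ * ‖ynext i j - ys j‖^2)
      = ∑ j, (if ι j = i then (σ j)⁻¹ * ‖ybar j - ys j‖^2 else (σ j)⁻¹ * ‖yk j - ys j‖^2) := by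
    intro i
    refine Finset.sum_congr rfl fun j _ => ?_
    rw [hynext i j]; by_cases h : ι j = i <;> simp [h]
  have hterm : ∀ i : Fin n,
      (f (xnext i) - f xs - ∑ l, ⟪gradf xs l, xnext i l - xs l⟫)
        + Vform Xs Ys Mb τ σ (fun l => xnext i l - xs l) (fun j => ynext i j - ys j)
      = f (xnext i) - f xs
        - (∑ l, (if l = i then ⟪gradf xs l, xbar l - xs l⟫ else ⟪gradf xs l, xk l - xs l⟫))
        + ((1/2) * ∑ l, (if l = i then (τ l)⁻¹ * ‖xbar l - xs l‖^2
              else (τ l)⁻¹ * ‖xk l - xs l‖^2)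
          + ∑ j, (if ι j = i then ⟪ybar j - ys j, Mb j (ι j) (xbar (ι j) - xs (ι j))⟫
              else ⟪yk j - ys j, Mb j (ι j) (xk (ι j) - xs (ι j))⟫)
          + (1/2) * ∑ j, (if ι j = i then (σ j)⁻¹ * ‖ybar j - ys j‖^2
              else (σ j)⁻¹ * ‖yk j - ys j‖^2)) := by
    intro i
    simp only [Vform]
    rw [e1 i, e2 i, e3 i, e4 i]
  -- the expectation identity
  have hL : ∑ i : Fin n,
        ((f (xnext i) - f xs - ∑ l, ⟪gradf xs l, xnext i l - xs l⟫)
          + Vform Xs Ys Mb τ σ (fun l => xnext i l - xs l) (fun j => ynext i j - ys j))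
      = ∑ i, f (xnext i) - (n:ℝ) * f xs
        - (∑ l, ⟪gradf xs l, xbar l - xs l⟫
            + ((n:ℝ) - 1) * ∑ l, ⟪gradf xs l, xk l - xs l⟫)
        + ((1/2) * (∑ l, (τ l)⁻¹ * ‖xbar l - xs l‖^2
              + ((n:ℝ) - 1) * ∑ l, (τ l)⁻¹ * ‖xk l - xs l‖^2)
          + (∑ j, ⟪ybar j - ys j, Mb j (ι j) (xbar (ι j) - xs (ι j))⟫
              + ((n:ℝ) - 1) * ∑ j, ⟪yk j - ys j, Mb j (ι j) (xk (ι j) - xs (ι j))⟫)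
          + (1/2) * (∑ j, (σ j)⁻¹ * ‖ybar j - ys j‖^2
              + ((n:ℝ) - 1) * ∑ j, (σ j)⁻¹ * ‖yk j - ys j‖^2)) := by
    rw [Finset.sum_congr rfl fun i _ => hterm i]
    simp only [Finset.sum_add_distrib, Finset.sum_sub_distrib, ← Finset.mul_sum,
      Finset.sum_const, Finset.card_univ, Fintype.card_fin, nsmul_eq_mul]
    rw [sum_sum_ite_id (fun l => ⟪gradf xs l, xbar l - xs l⟫)
        (fun l => ⟪gradf xs l, xk l - xs l⟫),
      sum_sum_ite_id (fun l => (τ l)⁻¹ * ‖xbar l - xs l‖^2)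
        (fun l => (τ l)⁻¹ * ‖xk l - xs l‖^2),
      sum_sum_ite ι (fun j => ⟪ybar j - ys j, Mb j (ι j) (xbar (ι j) - xs (ι j))⟫)
        (fun j => ⟪yk j - ys j, Mb j (ι j) (xk (ι j) - xs (ι j))⟫),
      sum_sum_ite ι (fun j => (σ j)⁻¹ * ‖ybar j - ys j‖^2)
        (fun j => (σ j)⁻¹ * ‖yk j - ys j‖^2)]
  -- finish
  rw [hL, hVk, hVt, one_div_mul_eq_div, div_le_iff₀ hn']
  have hexp : ((1 - 1 / (n:ℝ)) * (f xk - f xs - ∑ l, ⟪gradf xs l, xk l - xs l⟫)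
        + ((1/2) * ∑ l, (τ l)⁻¹ * ‖xk l - xs l‖^2
          + ∑ j, ⟪yk j - ys j, Mb j (ι j) (xk (ι j) - xs (ι j))⟫
          + (1/2) * ∑ j, (σ j)⁻¹ * ‖yk j - ys j‖^2)
        - 1 / (n:ℝ) * ((1/2) * (∑ i, (τ i)⁻¹ * ‖xbar i - xk i‖^2
              - ∑ i, β i * ‖xbar i - xk i‖^2)
          + ∑ j, ⟪ybar j - yk j, Mb j (ι j) (xbar (ι j) - xk (ι j))⟫
          + (1/2) * ∑ j, (σ j)⁻¹ * ‖ybar j - yk j‖^2)) * (n:ℝ)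
      = ((n:ℝ) - 1) * (f xk - f xs - ∑ l, ⟪gradf xs l, xk l - xs l⟫)
        + (n:ℝ) * ((1/2) * ∑ l, (τ l)⁻¹ * ‖xk l - xs l‖^2
          + ∑ j, ⟪yk j - ys j, Mb j (ι j) (xk (ι j) - xs (ι j))⟫
          + (1/2) * ∑ j, (σ j)⁻¹ * ‖yk j - ys j‖^2)
        - ((1/2) * (∑ i, (τ i)⁻¹ * ‖xbar i - xk i‖^2 - ∑ i, β i * ‖xbar i - xk i‖^2)
          + ∑ j, ⟪ybar j - yk j, Mb j (ι j) (xbar (ι j) - xk (ι j))⟫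
          + (1/2) * ∑ j, (σ j)⁻¹ * ‖ybar j - yk j‖^2) := by
    field_simp
  rw [hexp]
  linarith [hstarS]
end

section
/- Let (U_k) and (S_k) be sequences of nonnegative random variables adapted to a filtration (ℱ_k) such that E[U_{k+1} | ℱ_k] ≤ U_k - (1/n) S_k for all k, for some constant n > 0. Then almost surely lim_{k→∞} U_k exists (is finite) and Σ_k S_k < ∞; in particular S_k → 0 almost surely. -/
/-!
Compensating `U` by the accumulated decrease gives `V k = U k + (1/n) ∑_{j<k} S j`, a nonnegative
supermartingale. Its expectations are bounded by `E[U 0]`, so it is L¹-bounded and converges a.s.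
by the martingale convergence theorem. Along such an `ω` the partial sums of `S` are bounded by
`n · sup V`, hence `∑ S k ω < ∞`, and `U k ω = V k ω - (1/n) ∑_{j<k} S j ω` converges too.
-/

open MeasureTheory Filter Finset Topology

namespace MeasureTheory

variable {Ω : Type*} {m0 : MeasurableSpace Ω} {μ : Measure Ω} {ℱ : Filtration ℕ m0}

theorem Adapted.measurable_sum_of_le {S : ℕ → Ω → ℝ} (hS : Adapted ℱ S) {s : Finset ℕ} {k : ℕ}
    (hs : ∀ j ∈ s, j ≤ k) : Measurable[ℱ k] fun ω => ∑ j ∈ s, S j ω :=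
  Finset.measurable_fun_sum s fun j hj => (hS j).mono (ℱ.mono (hs j hj)) le_rfl

theorem Supermartingale.exists_ae_tendsto_of_nonneg [IsFiniteMeasure μ] {f : ℕ → Ω → ℝ}
    (hf : Supermartingale f ℱ μ) (hnonneg : ∀ k, 0 ≤ᵐ[μ] f k) :
    ∀ᵐ ω ∂μ, ∃ L, Tendsto (fun k => f k ω) atTop (𝓝 L) := by
  have hbdd : ∀ k, eLpNorm (-f k) 1 μ ≤ (∫ ω, f 0 ω ∂μ).toNNReal := by
    intro k
    have hint : ∫ ω, f k ω ∂μ ≤ ∫ ω, f 0 ω ∂μ := by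
      simpa using hf.setIntegral_le (Nat.zero_le k) MeasurableSet.univ
    rw [eLpNorm_neg, eLpNorm_one_eq_lintegral_enorm,
      ← ofReal_integral_norm_eq_lintegral_enorm (hf.integrable k)]
    refine ENNReal.ofReal_le_ofReal ((integral_congr_ae ?_).trans_le hint)
    filter_upwards [hnonneg k] with ω hω using Real.norm_of_nonneg hω
  filter_upwards [hf.neg.exists_ae_tendsto_of_bdd hbdd] with ω ⟨L, hL⟩
  exact ⟨-L, by simpa using hL.neg⟩

theorem supermartingale_add_sum_of_condExp_le_sub [IsFiniteMeasure μ] {U S : ℕ → Ω → ℝ}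
    (hU : Adapted ℱ U) (hS : Adapted ℱ S)
    (hUint : ∀ k, Integrable (U k) μ) (hSint : ∀ k, Integrable (S k) μ)
    (hsuper : ∀ k, μ[U (k + 1) | ℱ k] ≤ᵐ[μ] U k - S k) :
    Supermartingale (fun k ω => U k ω + ∑ j ∈ range k, S j ω) ℱ μ := by
  have hsum_int : ∀ k, Integrable (fun ω => ∑ j ∈ range k, S j ω) μ := fun k =>
    integrable_finsetSum _ fun j _ => hSint j
  have hadapted : Adapted ℱ fun k ω => U k ω + ∑ j ∈ range k, S j ω := fun k =>
    (hU k).add (hS.measurable_sum_of_le fun j hj => (mem_range.mp hj).le)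
  refine supermartingale_nat hadapted.stronglyAdapted (fun k => (hUint k).add (hsum_int k))
    fun k => ?_
  have hsum_cond : μ[fun ω => ∑ j ∈ range (k + 1), S j ω | ℱ k]
      = fun ω => ∑ j ∈ range (k + 1), S j ω :=
    condExp_of_stronglyMeasurable (ℱ.le k)
      (hS.measurable_sum_of_le fun j hj => Nat.lt_succ_iff.mp (mem_range.mp hj)).stronglyMeasurable
      (hsum_int (k + 1))
  refine (condExp_add (hUint (k + 1)) (hsum_int (k + 1)) (ℱ k)).trans_le ?_
  filter_upwards [hsuper k] with ω hω
  rw [Pi.add_apply, hsum_cond]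
  simp only [Pi.sub_apply, sum_range_succ] at hω ⊢
  linarith

theorem exists_tendsto_and_summable_of_tendsto_add_sum {u s : ℕ → ℝ} {L : ℝ}
    (hu : ∀ k, 0 ≤ u k) (hs : ∀ k, 0 ≤ s k)
    (hL : Tendsto (fun k => u k + ∑ j ∈ range k, s j) atTop (𝓝 L)) :
    (∃ L', Tendsto u atTop (𝓝 L')) ∧ Summable s := by
  obtain ⟨B, hB⟩ := hL.bddAbove_range
  have hsum : Summable s := summable_of_sum_range_le hs fun k =>
    (le_add_of_nonneg_left (hu k)).trans (hB (Set.mem_range_self k))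
  refine ⟨⟨L - ∑' j, s j, ?_⟩, hsum⟩
  simpa using hL.sub hsum.hasSum.tendsto_sum_nat

theorem ae_exists_tendsto_and_summable_of_condExp_le_sub [IsFiniteMeasure μ] {U S : ℕ → Ω → ℝ}
    (hU : Adapted ℱ U) (hS : Adapted ℱ S)
    (hUint : ∀ k, Integrable (U k) μ) (hSint : ∀ k, Integrable (S k) μ)
    (hUnonneg : ∀ k ω, 0 ≤ U k ω) (hSnonneg : ∀ k ω, 0 ≤ S k ω)
    (hsuper : ∀ k, μ[U (k + 1) | ℱ k] ≤ᵐ[μ] U k - S k) :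
    ∀ᵐ ω ∂μ, (∃ L, Tendsto (fun k => U k ω) atTop (𝓝 L)) ∧ Summable fun k => S k ω := by
  have hV := supermartingale_add_sum_of_condExp_le_sub hU hS hUint hSint hsuper
  have hVnonneg : ∀ k, 0 ≤ᵐ[μ] fun ω => U k ω + ∑ j ∈ range k, S j ω := fun k =>
    Eventually.of_forall fun ω => add_nonneg (hUnonneg k ω) (sum_nonneg fun j _ => hSnonneg j ω)
  filter_upwards [hV.exists_ae_tendsto_of_nonneg hVnonneg] with ω ⟨L, hL⟩
  exact exists_tendsto_and_summable_of_tendsto_add_sum (hUnonneg · ω) (hSnonneg · ω) hL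

end MeasureTheory

/-- (Robbins–Siegmund lemma, special case.) If `(U_k)` and `(S_k)` are
nonnegative adapted integrable sequences with `E[U_{k+1} | ℱ_k] ≤ U_k - (1/n) S_k`,
then almost surely `lim_k U_k` exists (finite), `∑_k S_k < ∞`, and `S_k → 0`. -/
theorem stmt17 {Ω : Type*} {m0 : MeasurableSpace Ω} {μ : Measure Ω}
    [IsProbabilityMeasure μ] (ℱ : Filtration ℕ m0)
    (U S : ℕ → Ω → ℝ) (n : ℝ) (hn : 0 < n)
    (hUadapted : Adapted ℱ U) (hSadapted : Adapted ℱ S)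
    (hUint : ∀ k, Integrable (U k) μ) (hSint : ∀ k, Integrable (S k) μ)
    (hUnonneg : ∀ k ω, 0 ≤ U k ω) (hSnonneg : ∀ k ω, 0 ≤ S k ω)
    (hsuper : ∀ k, μ[U (k + 1) | ℱ k] ≤ᵐ[μ] fun ω => U k ω - (1 / n) * S k ω) :
    ∀ᵐ ω ∂μ, (∃ L, Tendsto (fun k => U k ω) atTop (nhds L))
      ∧ Summable (fun k => S k ω)
      ∧ Tendsto (fun k => S k ω) atTop (nhds 0) := by
  have hc : 0 < 1 / n := by positivity
  have h := ae_exists_tendsto_and_summable_of_condExp_le_sub (S := fun k ω => 1 / n * S k ω)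
    hUadapted (fun k => (hSadapted k).const_mul _) hUint (fun k => (hSint k).const_mul _)
    hUnonneg (fun k ω => mul_nonneg hc.le (hSnonneg k ω)) hsuper
  filter_upwards [h] with ω ⟨hU, hS⟩
  have hS : Summable fun k => S k ω := (summable_mul_left_iff hc.ne').mp hS
  exact ⟨hU, hS, hS.tendsto_atTop_zero⟩
end
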